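/- arXiv:0712.3007 — 9 statements merged into one kernel-verified Lean document; each statement's English description precedes it below -/
import Mathlib

section
/- For every m×n matrix M with real entries, the tropical rank of M is at most the Kapranov rank of M, which is at most the Barvinok rank of M, which is at most min(m,n). -/
open scoped Classical

noncomputable section

/-- The field of generalized Puiseux series: Hahn series with real exponents
and complex coefficients. -/
abbrev Ktilde : Type := HahnSeries ℝ ℂ

/-- The order (least exponent) of a generalized Puiseux series. -/
def ord (x : Ktilde) : ℝ := x.order

/-- The leading coefficient of a generalized Puiseux series. -/
def orc (x : Ktilde) : ℂ := x.coeff x.order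

/-- The tropical determinant of a square real matrix. -/
def tropDet {r : ℕ} (A : Matrix (Fin r) (Fin r) ℝ) : ℝ :=
  sInf {v | ∃ σ : Equiv.Perm (Fin r), v = ∑ i, A i (σ i)}

/-- A square real matrix is tropically singular if the minimum in its
tropical determinant is attained by at least two permutations. -/
def TropSingular {r : ℕ} (A : Matrix (Fin r) (Fin r) ℝ) : Prop :=
  ∃ σ τ : Equiv.Perm (Fin r), σ ≠ τ ∧
    (∑ i, A i (σ i)) = tropDet A ∧ (∑ i, A i (τ i)) = tropDet A

/-- The tropical rank: the largest size of a tropically nonsingular square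
submatrix. -/
def tropRank {m n : ℕ} (M : Matrix (Fin m) (Fin n) ℝ) : ℕ :=
  sSup {r | ∃ ri : Fin r → Fin m, ∃ ci : Fin r → Fin n,
    Function.Injective ri ∧ Function.Injective ci ∧
    ¬ TropSingular (M.submatrix ri ci)}

/-- `F` is a lift of the real matrix `M`: all entries of `F` are nonzero
generalized Puiseux series whose orders are the entries of `M`. -/
def IsLift {m n : ℕ} (F : Matrix (Fin m) (Fin n) Ktilde)
    (M : Matrix (Fin m) (Fin n) ℝ) : Prop :=
  ∀ i j, F i j ≠ 0 ∧ ord (F i j) = M i j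

/-- The Kapranov rank: the smallest classical rank of a lift of `M` to the
field of generalized Puiseux series. -/
def kapRank {m n : ℕ} (M : Matrix (Fin m) (Fin n) ℝ) : ℕ :=
  sInf {r | ∃ F : Matrix (Fin m) (Fin n) Ktilde, IsLift F M ∧ F.rank ≤ r}

/-- The Barvinok rank: the smallest `r` such that `M` is the entrywise
(min-plus) sum of `r` tropical products of a column by a row. -/
def barvRank {m n : ℕ} (M : Matrix (Fin m) (Fin n) ℝ) : ℕ :=
  sInf {r | ∃ (A : Fin r → Fin m → ℝ) (B : Fin r → Fin n → ℝ),
    ∀ i j, IsLeast {v | ∃ l : Fin r, v = A l i + B l j} (M i j)}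

namespace Aux

open HahnSeries

lemma coeff_order_of_ne {x : Ktilde} (hx : x ≠ 0) : x.coeff x.order = x.leadingCoeff := by
  rw [leadingCoeff_eq]

lemma order_prod {ι : Type*} (s : Finset ι) (f : ι → Ktilde) (h : ∀ i ∈ s, f i ≠ 0) :
    (∏ i ∈ s, f i).order = ∑ i ∈ s, (f i).order := by
  classical
  induction s using Finset.induction_on with
  | empty => simp [HahnSeries.order_one]
  | @insert a s ha ih =>
    have h1 : f a ≠ 0 := h a (Finset.mem_insert_self _ _)
    have h2 : ∀ i ∈ s, f i ≠ 0 := fun i hi => h i (Finset.mem_insert_of_mem hi)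
    have h3 : (∏ i ∈ s, f i) ≠ 0 := Finset.prod_ne_zero_iff.mpr h2
    rw [Finset.prod_insert ha, Finset.sum_insert ha, HahnSeries.order_mul h1 h3, ih h2]

lemma leadingCoeff_prod {ι : Type*} (s : Finset ι) (f : ι → Ktilde) (h : ∀ i ∈ s, f i ≠ 0) :
    (∏ i ∈ s, f i).leadingCoeff = ∏ i ∈ s, (f i).leadingCoeff := by
  classical
  induction s using Finset.induction_on with
  | empty => simp [HahnSeries.leadingCoeff_one]
  | @insert a s ha ih =>
    have h1 : f a ≠ 0 := h a (Finset.mem_insert_self _ _)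
    have h2 : ∀ i ∈ s, f i ≠ 0 := fun i hi => h i (Finset.mem_insert_of_mem hi)
    have h3 : (∏ i ∈ s, f i) ≠ 0 := Finset.prod_ne_zero_iff.mpr h2
    have h4 : f a * ∏ i ∈ s, f i ≠ 0 := mul_ne_zero h1 h3
    rw [Finset.prod_insert ha, Finset.prod_insert ha,
      ← coeff_order_of_ne h4, HahnSeries.order_mul h1 h3,
      HahnSeries.coeff_mul_order_add_order, ih h2]

lemma order_eq_of {x : Ktilde} {c : ℝ} (h0 : x.coeff c ≠ 0)
    (h1 : ∀ g, g < c → x.coeff g = 0) : x ≠ 0 ∧ x.order = c := by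
  have hx : x ≠ 0 := fun h => h0 (by simp [h])
  refine ⟨hx, le_antisymm (order_le_of_coeff_ne_zero h0) ?_⟩
  by_contra h
  push_neg at h
  have := h1 x.order h
  rw [coeff_order_of_ne hx] at this
  exact leadingCoeff_ne_zero.mpr hx this

lemma tropDet_isLeast {r : ℕ} (A : Matrix (Fin r) (Fin r) ℝ) :
    IsLeast {v | ∃ σ : Equiv.Perm (Fin r), v = ∑ i, A i (σ i)} (tropDet A) := by
  have hEq : {v | ∃ σ : Equiv.Perm (Fin r), v = ∑ i, A i (σ i)} =
      Set.range (fun σ : Equiv.Perm (Fin r) => ∑ i, A i (σ i)) := by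
    ext v; simp [Set.range, eq_comm]
  have hfin : {v | ∃ σ : Equiv.Perm (Fin r), v = ∑ i, A i (σ i)}.Finite := by
    rw [hEq]; exact Set.finite_range _
  have hne : {v | ∃ σ : Equiv.Perm (Fin r), v = ∑ i, A i (σ i)}.Nonempty :=
    ⟨∑ i, A i ((1 : Equiv.Perm (Fin r)) i), ⟨1, rfl⟩⟩
  exact ⟨hne.csInf_mem hfin, fun v hv => csInf_le hfin.bddBelow hv⟩

lemma det_lift_ne_zero {r : ℕ} {A : Matrix (Fin r) (Fin r) ℝ}
    {F : Matrix (Fin r) (Fin r) Ktilde} (hF : IsLift F A) (hA : ¬ TropSingular A) :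
    F.det ≠ 0 := by
  obtain ⟨⟨σ₀, hσ₀⟩, hlb⟩ := tropDet_isLeast A
  set d := tropDet A with hd
  -- products along permutations
  have hne : ∀ σ : Equiv.Perm (Fin r), (∏ i, F i (σ i)) ≠ 0 :=
    fun σ => Finset.prod_ne_zero_iff.mpr fun i _ => (hF i (σ i)).1
  have hord : ∀ σ : Equiv.Perm (Fin r), (∏ i, F i (σ i)).order = ∑ i, A i (σ i) := by
    intro σ
    rw [order_prod _ _ (fun i _ => (hF i (σ i)).1)]
    exact Finset.sum_congr rfl fun i _ => (hF i (σ i)).2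
  have huniq : ∀ σ : Equiv.Perm (Fin r), σ ≠ σ₀ → d < ∑ i, A i (σ i) := by
    intro σ hσ
    rcases lt_or_eq_of_le (hlb ⟨σ, rfl⟩) with h | h
    · exact h
    · exact absurd ⟨σ, σ₀, hσ, h.symm, hσ₀.symm⟩ hA
  -- determinant via transpose
  have hdet : F.det = ∑ σ : Equiv.Perm (Fin r), Equiv.Perm.sign σ • ∏ i, F i (σ i) := by
    rw [← Matrix.det_transpose, Matrix.det_apply]
    exact Finset.sum_congr rfl fun σ _ => by simp [Matrix.transpose_apply]
  have hsmul : ∀ (u : ℤˣ) (x : Ktilde) (g : ℝ), (u • x).coeff g = u • x.coeff g := by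
    intro u x g
    rcases Int.units_eq_one_or u with h | h <;> simp [h, HahnSeries.coeff_neg]
  have hcoeff : F.det.coeff d ≠ 0 := by
    have : F.det.coeff d =
        ∑ σ : Equiv.Perm (Fin r), (Equiv.Perm.sign σ • ∏ i, F i (σ i)).coeff d := by
      rw [hdet]
      exact map_sum (HahnSeries.coeff.addMonoidHom d) _ Finset.univ
    rw [this, Finset.sum_eq_single σ₀]
    · have hordd : (∏ i, F i (σ₀ i)).order = d := by rw [hord σ₀, ← hσ₀]
      rw [hsmul, ← hordd, coeff_order_of_ne (hne σ₀),
        leadingCoeff_prod _ _ (fun i _ => (hF i (σ₀ i)).1)]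
      have hprod : (∏ i, (F i (σ₀ i)).leadingCoeff) ≠ 0 :=
        Finset.prod_ne_zero_iff.mpr fun i _ =>
          HahnSeries.leadingCoeff_ne_zero.mpr (hF i (σ₀ i)).1
      rcases Int.units_eq_one_or (Equiv.Perm.sign σ₀) with h | h <;> simp [h, hprod]
    · intro σ _ hσ
      rw [hsmul]
      have : (∏ i, F i (σ i)).coeff d = 0 := by
        apply HahnSeries.coeff_eq_zero_of_lt_order
        rw [hord σ]
        exact huniq σ hσ
      rw [this, smul_zero]
    · intro h; exact absurd (Finset.mem_univ σ₀) h
  exact fun h => hcoeff (by simp [h])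



lemma rank_submatrix_le' {m n r s : ℕ} (F : Matrix (Fin m) (Fin n) Ktilde)
    (ri : Fin r → Fin m) (ci : Fin s → Fin n) :
    (F.submatrix ri ci).rank ≤ F.rank := by
  have h1 : F.submatrix ri ci =
      (Matrix.of fun i k => if ri i = k then (1 : Ktilde) else 0) * F *
      (Matrix.of fun k j => if k = ci j then (1 : Ktilde) else 0) := by
    ext i j
    simp [Matrix.mul_apply, Finset.sum_ite_eq, Finset.sum_ite_eq', ite_mul, mul_ite,
      Finset.mul_sum, Finset.sum_mul]
  rw [h1]
  exact le_trans (Matrix.rank_mul_le_left _ _) (Matrix.rank_mul_le_right _ _)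



-- Kapranov lift from a Barvinok decomposition
lemma lift_of_barv {m n r : ℕ} (M : Matrix (Fin m) (Fin n) ℝ)
    (A : Fin r → Fin m → ℝ) (B : Fin r → Fin n → ℝ)
    (h : ∀ i j, IsLeast {v | ∃ l : Fin r, v = A l i + B l j} (M i j)) :
    ∃ F : Matrix (Fin m) (Fin n) Ktilde,
      (∀ i j, F i j ≠ 0 ∧ (F i j).order = M i j) ∧ F.rank ≤ r := by
  set P : Matrix (Fin m) (Fin r) Ktilde :=
    Matrix.of fun i l => HahnSeries.single (A l i) (1 : ℂ) with hP
  set Q : Matrix (Fin r) (Fin n) Ktilde :=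
    Matrix.of fun l j => HahnSeries.single (B l j) (1 : ℂ) with hQ
  refine ⟨P * Q, ?_, le_trans (Matrix.rank_mul_le_right _ _)
    (le_trans (Matrix.rank_le_card_height _) (by simp))⟩
  intro i j
  have hentry : (P * Q) i j = ∑ l, HahnSeries.single (A l i + B l j) (1 : ℂ) := by
    simp [Matrix.mul_apply, hP, hQ, HahnSeries.single_mul_single]
  have hcoeff : ∀ g : ℝ, ((P * Q) i j).coeff g =
      ((Finset.univ.filter fun l : Fin r => A l i + B l j = g).card : ℂ) := by
    intro g
    have hms := map_sum (HahnSeries.coeff.addMonoidHom g)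
      (fun l : Fin r => HahnSeries.single (A l i + B l j) (1 : ℂ)) Finset.univ
    simp only [HahnSeries.coeff.addMonoidHom_apply] at hms
    rw [hentry, hms]
    simp only [HahnSeries.coeff_single]
    rw [Finset.sum_boole]
    congr 2
    apply Finset.filter_congr
    intro x _
    simp [eq_comm]
  obtain ⟨⟨l₀, hl₀⟩, hlb⟩ := h i j
  have h0 : ((P * Q) i j).coeff (M i j) ≠ 0 := by
    rw [hcoeff]
    have : l₀ ∈ Finset.univ.filter fun l : Fin r => A l i + B l j = M i j := by
      simp [hl₀.symm]
    have hpos : 0 < (Finset.univ.filter fun l : Fin r => A l i + B l j = M i j).card :=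
      Finset.card_pos.mpr ⟨l₀, this⟩
    exact_mod_cast Nat.cast_ne_zero.mpr hpos.ne'
  have h1 : ∀ g, g < M i j → ((P * Q) i j).coeff g = 0 := by
    intro g hg
    rw [hcoeff]
    have : (Finset.univ.filter fun l : Fin r => A l i + B l j = g) = ∅ := by
      apply Finset.filter_false_of_mem
      intro l _
      exact fun hc => absurd (hc ▸ hlb ⟨l, rfl⟩) (not_le.mpr hg)
    simp [this]
  obtain ⟨hne, hord⟩ := order_eq_of h0 h1
  exact ⟨hne, hord⟩


end Aux

namespace Aux

lemma barv_left {m n : ℕ} (M : Matrix (Fin m) (Fin n) ℝ) :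
    ∃ (A : Fin m → Fin m → ℝ) (B : Fin m → Fin n → ℝ),
      ∀ i j, IsLeast {v | ∃ l : Fin m, v = A l i + B l j} (M i j) := by
  have habs : ∀ a b, |M a b| ≤ ∑ a' : Fin m, ∑ b' : Fin n, |M a' b'| := by
    intro a b
    calc |M a b| ≤ ∑ b', |M a b'| :=
          Finset.single_le_sum (f := fun b' => |M a b'|)
          (fun _ _ => abs_nonneg _) (Finset.mem_univ b)
      _ ≤ ∑ a' : Fin m, ∑ b' : Fin n, |M a' b'| :=
          Finset.single_le_sum (f := fun a' => ∑ b' : Fin n, |M a' b'|)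
          (fun a' _ => Finset.sum_nonneg fun _ _ => abs_nonneg _) (Finset.mem_univ a)
  refine ⟨fun l i => if l = i then 0
      else 1 + 2 * ∑ a' : Fin m, ∑ b' : Fin n, |M a' b'|, fun l j => M l j, ?_⟩
  intro i j
  constructor
  · exact ⟨i, by simp⟩
  · rintro v ⟨l, rfl⟩
    by_cases h : l = i
    · subst h; simp
    · simp only [if_neg h]
      have hij := abs_le.mp (habs i j)
      have hlj := abs_le.mp (habs l j)
      linarith [hij.2, hlj.1]

lemma barv_right {m n : ℕ} (M : Matrix (Fin m) (Fin n) ℝ) :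
    ∃ (A : Fin n → Fin m → ℝ) (B : Fin n → Fin n → ℝ),
      ∀ i j, IsLeast {v | ∃ l : Fin n, v = A l i + B l j} (M i j) := by
  have habs : ∀ a b, |M a b| ≤ ∑ a' : Fin m, ∑ b' : Fin n, |M a' b'| := by
    intro a b
    calc |M a b| ≤ ∑ b', |M a b'| :=
          Finset.single_le_sum (f := fun b' => |M a b'|)
          (fun _ _ => abs_nonneg _) (Finset.mem_univ b)
      _ ≤ ∑ a' : Fin m, ∑ b' : Fin n, |M a' b'| :=
          Finset.single_le_sum (f := fun a' => ∑ b' : Fin n, |M a' b'|)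
          (fun a' _ => Finset.sum_nonneg fun _ _ => abs_nonneg _) (Finset.mem_univ a)
  refine ⟨fun l i => M i l, fun l j => if l = j then 0
      else 1 + 2 * ∑ a' : Fin m, ∑ b' : Fin n, |M a' b'|, ?_⟩
  intro i j
  constructor
  · exact ⟨j, by simp⟩
  · rintro v ⟨l, rfl⟩
    by_cases h : l = j
    · subst h; simp
    · simp only [if_neg h]
      have hij := abs_le.mp (habs i j)
      have hil := abs_le.mp (habs i l)
      linarith [hij.2, hil.1]

end Aux

theorem trop_le_kap_le_barv_le_min {m n : ℕ} (M : Matrix (Fin m) (Fin n) ℝ) :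
    tropRank M ≤ kapRank M ∧ kapRank M ≤ barvRank M ∧ barvRank M ≤ min m n := by
  set Sb := {r | ∃ (A : Fin r → Fin m → ℝ) (B : Fin r → Fin n → ℝ),
    ∀ i j, IsLeast {v | ∃ l : Fin r, v = A l i + B l j} (M i j)} with hSb
  set Sk := {r | ∃ F : Matrix (Fin m) (Fin n) Ktilde, IsLift F M ∧ F.rank ≤ r} with hSk
  have hm : m ∈ Sb := Aux.barv_left M
  have hn : n ∈ Sb := Aux.barv_right M
  have h3 : barvRank M ≤ min m n := le_min (Nat.sInf_le hm) (Nat.sInf_le hn)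
  have hsub : ∀ r ∈ Sb, r ∈ Sk := by
    rintro r ⟨A, B, hAB⟩
    obtain ⟨F, hF, hFr⟩ := Aux.lift_of_barv M A B hAB
    exact ⟨F, fun i j => (hF i j), hFr⟩
  have hbmem : barvRank M ∈ Sb := Nat.sInf_mem ⟨m, hm⟩
  have h2 : kapRank M ≤ barvRank M := Nat.sInf_le (hsub _ hbmem)
  have hkmem : kapRank M ∈ Sk := Nat.sInf_mem ⟨barvRank M, hsub _ hbmem⟩
  obtain ⟨F, hF, hFrank⟩ := hkmem
  have h1 : tropRank M ≤ kapRank M := by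
    apply csSup_le
    · refine ⟨0, Fin.elim0, Fin.elim0, fun a => a.elim0, fun a => a.elim0, ?_⟩
      rintro ⟨σ, τ, hστ, -, -⟩
      exact hστ (Subsingleton.elim σ τ)
    · rintro r ⟨ri, ci, hri, hci, hns⟩
      have hlift : IsLift (F.submatrix ri ci) (M.submatrix ri ci) :=
        fun i j => hF (ri i) (ci j)
      have hdet := Aux.det_lift_ne_zero hlift hns
      have hunit : IsUnit (F.submatrix ri ci) :=
        (Matrix.isUnit_iff_isUnit_det _).mpr (isUnit_iff_ne_zero.mpr hdet)
      have heq : (F.submatrix ri ci).rank = r := by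
        rw [Matrix.rank_of_isUnit _ hunit, Fintype.card_fin]
      calc r = (F.submatrix ri ci).rank := heq.symm
        _ ≤ F.rank := Aux.rank_submatrix_le' F ri ci
        _ ≤ kapRank M := hFrank
  exact ⟨h1, h2, h3⟩
end
end

section
/- If M is an m×n real matrix with min(m,n) = k and the tropical rank of M equals k, then the Kapranov rank of M also equals k. -/
open scoped Classical

noncomputable section

/-- Coefficient of an integer multiple. -/
lemma zsmul_coeff (d : ℝ) (z : ℤ) (x : Ktilde) : (z • x).coeff d = z • x.coeff d :=
  map_zsmul (HahnSeries.coeff.addMonoidHom d) z x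

/-- Order of a finite product of nonzero Hahn series. -/
lemma order_prod_aux {ι : Type*} (s : Finset ι) (f : ι → Ktilde) (hf : ∀ i ∈ s, f i ≠ 0) :
    (∏ i ∈ s, f i).order = ∑ i ∈ s, (f i).order := by
  induction s using Finset.cons_induction with
  | empty => simp [HahnSeries.order_one]
  | cons a s ha ih =>
      rw [Finset.prod_cons, Finset.sum_cons,
        HahnSeries.order_mul (hf a (Finset.mem_cons_self a s))
          (Finset.prod_ne_zero_iff.2 fun i hi => hf i (Finset.mem_cons_of_mem hi)),
        ih fun i hi => hf i (Finset.mem_cons_of_mem hi)]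

/-- A lift of a tropically nonsingular square matrix has nonzero determinant. -/
lemma det_lift_ne_zero {k : ℕ} (A : Matrix (Fin k) (Fin k) ℝ)
    (G : Matrix (Fin k) (Fin k) Ktilde)
    (hG : ∀ i j, G i j ≠ 0 ∧ ord (G i j) = A i j)
    (hns : ¬ TropSingular A) : G.det ≠ 0 := by
  set S : Set ℝ := {v | ∃ σ : Equiv.Perm (Fin k), v = ∑ i, A i (σ i)} with hS
  have hfin : S.Finite := by
    have hsub : S ⊆ Set.range (fun σ : Equiv.Perm (Fin k) => ∑ i, A i (σ i)) := by
      rintro v ⟨σ, rfl⟩; exact ⟨σ, rfl⟩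
    exact (Set.finite_range _).subset hsub
  have hne : S.Nonempty := ⟨_, 1, rfl⟩
  obtain ⟨σ₀, hσ₀⟩ : tropDet A ∈ S := hne.csInf_mem hfin
  have hgt : ∀ τ : Equiv.Perm (Fin k), τ ≠ σ₀ → tropDet A < ∑ i, A i (τ i) := by
    intro τ hτ
    have h1 : tropDet A ≤ ∑ i, A i (τ i) := csInf_le hfin.bddBelow ⟨τ, rfl⟩
    refine h1.lt_of_ne fun he => hns ⟨τ, σ₀, hτ, he.symm, hσ₀.symm⟩
  have hprod : ∀ σ : Equiv.Perm (Fin k), (∏ i, G (σ i) i) ≠ 0 ∧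
      (∏ i, G (σ i) i).order = ∑ i, A i (σ⁻¹ i) := by
    intro σ
    have h0 : (∏ i, G (σ i) i) ≠ 0 :=
      Finset.prod_ne_zero_iff.2 fun i _ => (hG (σ i) i).1
    refine ⟨h0, ?_⟩
    rw [order_prod_aux _ _ fun i _ => (hG (σ i) i).1]
    calc ∑ i, (G (σ i) i).order = ∑ i, A (σ i) (σ⁻¹ (σ i)) := by
          refine Finset.sum_congr rfl fun i _ => ?_
          rw [show σ⁻¹ (σ i) = i from σ.symm_apply_apply i]; exact (hG (σ i) i).2
      _ = ∑ i, A i (σ⁻¹ i) := Equiv.sum_comp σ (fun j => A j (σ⁻¹ j))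
  intro hdet
  have hc : G.det.coeff (tropDet A) = 0 := by rw [hdet]; simp
  rw [Matrix.det_apply] at hc
  have hmap : ∀ (s : Finset (Equiv.Perm (Fin k))),
      ((∑ σ ∈ s, Equiv.Perm.sign σ • ∏ i, G (σ i) i).coeff (tropDet A))
      = ∑ σ ∈ s, Equiv.Perm.sign σ • ((∏ i, G (σ i) i).coeff (tropDet A)) := by
    intro s
    induction s using Finset.cons_induction with
    | empty => simp
    | cons a s ha ih =>
        rw [Finset.sum_cons, Finset.sum_cons, HahnSeries.coeff_add, ih,
          Units.smul_def, Units.smul_def, zsmul_coeff]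
  rw [hmap] at hc
  have hsingle : ∀ σ ∈ (Finset.univ : Finset (Equiv.Perm (Fin k))), σ ≠ σ₀⁻¹ →
      Equiv.Perm.sign σ • ((∏ i, G (σ i) i).coeff (tropDet A)) = 0 := by
    intro σ _ hσ
    have hinv : σ⁻¹ ≠ σ₀ := fun he => hσ (by rw [← he]; simp)
    have hlt : tropDet A < (∏ i, G (σ i) i).order := by
      rw [(hprod σ).2]; exact hgt _ hinv
    rw [HahnSeries.coeff_eq_zero_of_lt_order hlt, smul_zero]
  rw [Finset.sum_eq_single_of_mem σ₀⁻¹ (Finset.mem_univ _) hsingle] at hc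
  have horder : (∏ i, G (σ₀⁻¹ i) i).order = tropDet A := by
    rw [(hprod σ₀⁻¹).2, inv_inv, ← hσ₀]
  have hne0 : ((∏ i, G (σ₀⁻¹ i) i).coeff (tropDet A)) ≠ 0 := by
    rw [← horder]
    rw [← HahnSeries.leadingCoeff_eq]; exact HahnSeries.leadingCoeff_ne_zero.mpr (hprod σ₀⁻¹).1
  rw [Units.smul_def, zsmul_eq_mul] at hc
  rcases mul_eq_zero.mp hc with h1 | h2
  · exact Int.cast_ne_zero.2 (Units.ne_zero _) h1
  · exact hne0 h2

/-- Rank of a submatrix is at most the rank of the matrix (field case). -/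
lemma rank_submatrix_le' {R : Type*} [Field R] {m n k l : ℕ}
    (A : Matrix (Fin m) (Fin n) R) (ri : Fin k → Fin m) (ci : Fin l → Fin n) :
    (A.submatrix ri ci).rank ≤ A.rank := by
  rw [Matrix.rank_eq_finrank_span_cols, Matrix.rank_eq_finrank_span_cols]
  have hsub : Set.range (A.submatrix ri ci).transpose ⊆
      ⇑(LinearMap.funLeft R R ri) '' Set.range A.transpose := by
    rintro _ ⟨j, rfl⟩
    exact ⟨A.transpose (ci j), ⟨ci j, rfl⟩, rfl⟩
  calc Module.finrank R (Submodule.span R (Set.range (A.submatrix ri ci).transpose))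
      ≤ Module.finrank R
          (Submodule.span R (⇑(LinearMap.funLeft R R ri) '' Set.range A.transpose)) :=
        Submodule.finrank_mono (Submodule.span_mono hsub)
    _ = Module.finrank R (Submodule.map (LinearMap.funLeft R R ri)
          (Submodule.span R (Set.range A.transpose))) := by
        rw [Submodule.span_image]
    _ ≤ Module.finrank R (Submodule.span R (Set.range A.transpose)) :=
        Submodule.finrank_map_le _ _

theorem tropRank_eq_min_imp_kapRank {m n k : ℕ} (M : Matrix (Fin m) (Fin n) ℝ)
    (hk : min m n = k) (h : tropRank M = k) : kapRank M = k := by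
  -- The set defining tropRank attains its sSup.
  set T : Set ℕ := {r | ∃ ri : Fin r → Fin m, ∃ ci : Fin r → Fin n,
    Function.Injective ri ∧ Function.Injective ci ∧
    ¬ TropSingular (M.submatrix ri ci)} with hT
  have hTne : T.Nonempty := by
    refine ⟨0, Fin.elim0, Fin.elim0, fun a => a.elim0, fun a => a.elim0, ?_⟩
    rintro ⟨σ, τ, hστ, -⟩
    exact hστ (Subsingleton.elim σ τ)
  have hTbdd : BddAbove T := by
    refine ⟨m, fun r hr => ?_⟩
    obtain ⟨ri, _, hri, _, _⟩ := hr
    simpa using Fintype.card_le_of_injective ri hri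
  have hkT : k ∈ T := by
    rw [← h]
    exact Nat.sSup_mem hTne hTbdd
  obtain ⟨ri, ci, hri, hci, hns⟩ := hkT
  -- canonical monomial lift
  set F0 : Matrix (Fin m) (Fin n) Ktilde :=
    fun i j => HahnSeries.single (M i j) (1 : ℂ) with hF0
  have hF0lift : IsLift F0 M := by
    intro i j
    exact ⟨HahnSeries.single_ne_zero one_ne_zero, HahnSeries.order_single one_ne_zero⟩
  have hkmem : k ∈ {r | ∃ F : Matrix (Fin m) (Fin n) Ktilde, IsLift F M ∧ F.rank ≤ r} := by
    refine ⟨F0, hF0lift, ?_⟩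
    rw [← hk]
    exact le_min (Matrix.rank_le_height F0) (Matrix.rank_le_width F0)
  -- lower bound: every lift has rank at least k
  have hlb : ∀ r ∈ {r | ∃ F : Matrix (Fin m) (Fin n) Ktilde, IsLift F M ∧ F.rank ≤ r},
      k ≤ r := by
    rintro r ⟨F, hF, hFr⟩
    set G : Matrix (Fin k) (Fin k) Ktilde := F.submatrix ri ci with hGdef
    have hGlift : ∀ i j, G i j ≠ 0 ∧ ord (G i j) = (M.submatrix ri ci) i j :=
      fun i j => hF (ri i) (ci j)
    have hdet : G.det ≠ 0 := det_lift_ne_zero _ _ hGlift hns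
    have hunit : IsUnit G := (Matrix.isUnit_iff_isUnit_det G).2 (isUnit_iff_ne_zero.2 hdet)
    have hGrank : G.rank = k := by
      rw [Matrix.rank_of_isUnit G hunit, Fintype.card_fin]
    calc k = G.rank := hGrank.symm
      _ ≤ F.rank := rank_submatrix_le' F ri ci
      _ ≤ r := hFr
  exact le_antisymm (Nat.sInf_le hkmem) (le_csInf ⟨k, hkmem⟩ hlb)
end
end

section
/- Let a, b, c, d be Puiseux series of order 0, let r, r' be positive reals with r ≠ r', and let m be a positive real. Then there exist Puiseux series λ₁, λ₂ of order ≥ −m with ord(λ₁a + λ₂b) = r and ord(λ₁c + λ₂d) = r' if and only if the vectors (a,b) and (c,d) are linearly independent and ord(ad − bc) ≤ min(r, r') + m. -/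
open scoped Classical

noncomputable section

lemma aux_ord_add_of_lt {x y : Ktilde} (hx : x ≠ 0) (h : ord x < ord y) :
    x + y ≠ 0 ∧ ord (x + y) = ord x := by
  have hyc : y.coeff x.order = 0 := HahnSeries.coeff_eq_zero_of_lt_order h
  have hco : (x + y).coeff x.order ≠ 0 := by
    rw [HahnSeries.coeff_add, hyc, add_zero]
    exact HahnSeries.coeff_order_eq_zero.not.mpr hx
  have hne : x + y ≠ 0 := HahnSeries.ne_zero_of_coeff_ne_zero hco
  refine ⟨hne, le_antisymm (HahnSeries.order_le_of_coeff_ne_zero hco) ?_⟩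
  have := HahnSeries.min_order_le_order_add (x := x) (y := y) hne
  have hmin : min x.order y.order = x.order := min_eq_left h.le
  simpa [ord, hmin] using this

lemma aux_ord_add_of_ne {x y : Ktilde} (hx : x ≠ 0) (hy : y ≠ 0) (h : ord x ≠ ord y) :
    x + y ≠ 0 ∧ ord (x + y) = min (ord x) (ord y) := by
  rcases lt_or_gt_of_ne h with hlt | hgt
  · obtain ⟨h1, h2⟩ := aux_ord_add_of_lt hx hlt
    exact ⟨h1, by rw [h2, min_eq_left hlt.le]⟩
  · obtain ⟨h1, h2⟩ := aux_ord_add_of_lt hy hgt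
    rw [add_comm] at h1 h2
    exact ⟨h1, by rw [h2, min_eq_right hgt.le]⟩

lemma aux_ord_sub_of_ne {x y : Ktilde} (hx : x ≠ 0) (hy : y ≠ 0) (h : ord x ≠ ord y) :
    x - y ≠ 0 ∧ ord (x - y) = min (ord x) (ord y) := by
  have hny : (-y : Ktilde) ≠ 0 := neg_ne_zero.mpr hy
  have hon : ord (-y) = ord y := HahnSeries.order_neg
  obtain ⟨h1, h2⟩ := aux_ord_add_of_ne hx hny (by rw [hon]; exact h)
  rw [← sub_eq_add_neg] at h1 h2
  exact ⟨h1, by rw [h2, hon]⟩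

lemma aux_ord_mul {x y : Ktilde} (hx : x ≠ 0) (hy : y ≠ 0) :
    ord (x * y) = ord x + ord y := HahnSeries.order_mul hx hy

lemma aux_ord_inv {x : Ktilde} (hx : x ≠ 0) : ord x⁻¹ = -ord x := by
  have hinv : x⁻¹ ≠ 0 := inv_ne_zero hx
  have h1 : ord (x * x⁻¹) = ord x + ord x⁻¹ := aux_ord_mul hx hinv
  rw [mul_inv_cancel₀ hx] at h1
  have : ord (1 : Ktilde) = 0 := by
    simp [ord, HahnSeries.order_one]
  rw [this] at h1
  linarith

lemma aux_indep_iff (a b c d : Ktilde) :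
    LinearIndependent Ktilde ![![a, b], ![c, d]] ↔ a * d - b * c ≠ 0 := by
  have heq : (![![a, b], ![c, d]] : Fin 2 → Fin 2 → Ktilde)
      = (!![a, b; c, d] : Matrix (Fin 2) (Fin 2) Ktilde).row := by
    funext i j
    fin_cases i <;> fin_cases j <;> rfl
  rw [heq, Matrix.linearIndependent_rows_iff_isUnit, Matrix.isUnit_iff_isUnit_det,
    Matrix.det_fin_two_of, isUnit_iff_ne_zero]

theorem exists_lambdas_iff_indep_and_ord_det (a b c d : Ktilde)
    (ha : a ≠ 0) (hb : b ≠ 0) (hc : c ≠ 0) (hd : d ≠ 0)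
    (ha0 : ord a = 0) (hb0 : ord b = 0) (hc0 : ord c = 0) (hd0 : ord d = 0)
    (r r' m : ℝ) (hr : 0 < r) (hr' : 0 < r') (hrr' : r ≠ r') (hm : 0 < m) :
    (∃ lam1 lam2 : Ktilde, lam1 ≠ 0 ∧ lam2 ≠ 0 ∧
        -m ≤ ord lam1 ∧ -m ≤ ord lam2 ∧
        lam1 * a + lam2 * b ≠ 0 ∧ ord (lam1 * a + lam2 * b) = r ∧
        lam1 * c + lam2 * d ≠ 0 ∧ ord (lam1 * c + lam2 * d) = r') ↔
      (LinearIndependent Ktilde ![![a, b], ![c, d]] ∧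
        ord (a * d - b * c) ≤ min r r' + m) := by
  constructor
  · rintro ⟨lam1, lam2, h1, h2, hm1, hm2, hX, hXr, hY, hYr'⟩
    have hXd : ord ((lam1 * a + lam2 * b) * d) = r := by
      rw [aux_ord_mul hX hd, hXr, hd0, add_zero]
    have hYb : ord ((lam1 * c + lam2 * d) * b) = r' := by
      rw [aux_ord_mul hY hb, hYr', hb0, add_zero]
    obtain ⟨hsne, hsord⟩ := aux_ord_sub_of_ne (mul_ne_zero hX hd) (mul_ne_zero hY hb)
      (by rw [hXd, hYb]; exact hrr')
    have hiden : (lam1 * a + lam2 * b) * d - (lam1 * c + lam2 * d) * b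
        = lam1 * (a * d - b * c) := by ring
    rw [hiden] at hsne hsord
    have he : a * d - b * c ≠ 0 := right_ne_zero_of_mul hsne
    have hmulord : ord lam1 + ord (a * d - b * c) = min r r' := by
      rw [← aux_ord_mul h1 he, hsord, hXd, hYb]
    refine ⟨(aux_indep_iff a b c d).mpr he, ?_⟩
    linarith
  · rintro ⟨hind, hord⟩
    have he : a * d - b * c ≠ 0 := (aux_indep_iff a b c d).mp hind
    set e : Ktilde := a * d - b * c with hedef
    set t1 : Ktilde := HahnSeries.single r (1 : ℂ) with ht1def
    set t2 : Ktilde := HahnSeries.single r' (1 : ℂ) with ht2def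
    have ht1 : t1 ≠ 0 := HahnSeries.single_ne_zero one_ne_zero
    have ht2 : t2 ≠ 0 := HahnSeries.single_ne_zero one_ne_zero
    have hot1 : ord t1 = r := HahnSeries.order_single one_ne_zero
    have hot2 : ord t2 = r' := HahnSeries.order_single one_ne_zero
    have hdt1 : ord (d * t1) = r := by rw [aux_ord_mul hd ht1, hd0, hot1, zero_add]
    have hbt2 : ord (b * t2) = r' := by rw [aux_ord_mul hb ht2, hb0, hot2, zero_add]
    have hat2 : ord (a * t2) = r' := by rw [aux_ord_mul ha ht2, ha0, hot2, zero_add]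
    have hct1 : ord (c * t1) = r := by rw [aux_ord_mul hc ht1, hc0, hot1, zero_add]
    obtain ⟨hn1, hn1o⟩ := aux_ord_sub_of_ne (mul_ne_zero hd ht1) (mul_ne_zero hb ht2)
      (by rw [hdt1, hbt2]; exact hrr')
    obtain ⟨hn2, hn2o⟩ := aux_ord_sub_of_ne (mul_ne_zero ha ht2) (mul_ne_zero hc ht1)
      (by rw [hat2, hct1]; exact Ne.symm hrr')
    rw [hdt1, hbt2] at hn1o
    rw [hat2, hct1] at hn2o
    have hinv : (e⁻¹ : Ktilde) ≠ 0 := inv_ne_zero he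
    have hoinv : ord e⁻¹ = -ord e := aux_ord_inv he
    refine ⟨(d * t1 - b * t2) * e⁻¹, (a * t2 - c * t1) * e⁻¹,
      mul_ne_zero hn1 hinv, mul_ne_zero hn2 hinv, ?_, ?_, ?_, ?_, ?_, ?_⟩
    · rw [aux_ord_mul hn1 hinv, hn1o, hoinv]
      linarith
    · rw [aux_ord_mul hn2 hinv, hn2o, hoinv, min_comm r' r]
      linarith
    · have hXe : (d * t1 - b * t2) * e⁻¹ * a + (a * t2 - c * t1) * e⁻¹ * b = t1 := by
        field_simp
        ring
      rw [hXe]; exact ht1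
    · have hXe : (d * t1 - b * t2) * e⁻¹ * a + (a * t2 - c * t1) * e⁻¹ * b = t1 := by
        field_simp
        ring
      rw [hXe]; exact hot1
    · have hYe : (d * t1 - b * t2) * e⁻¹ * c + (a * t2 - c * t1) * e⁻¹ * d = t2 := by
        field_simp
        ring
      rw [hYe]; exact ht2
    · have hYe : (d * t1 - b * t2) * e⁻¹ * c + (a * t2 - c * t1) * e⁻¹ * d = t2 := by
        field_simp
        ring
      rw [hYe]; exact hot2
end
end

section
/- Let X₁, ..., X_r be nonzero Puiseux series with orders x₁, ..., x_r, and let l₁, ..., l_r, k be reals such that h := x₁ + l₁ = x₂ + l₂ = ... = x_r + l_r ≤ k, with r ≥ 2. Then there exist Puiseux series λ₁, ..., λ_r of orders l₁, ..., l_r respectively such that ord(λ₁X₁ + ... + λ_rX_r) = k. -/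
open scoped Classical

noncomputable section

theorem exists_coeffs_sum_order_eq {r : ℕ} (hr : 2 ≤ r)
    (X : Fin r → Ktilde) (hX : ∀ i, X i ≠ 0)
    (l : Fin r → ℝ) (h k : ℝ)
    (hh : ∀ i, ord (X i) + l i = h) (hk : h ≤ k) :
    ∃ lam : Fin r → Ktilde,
      (∀ i, lam i ≠ 0 ∧ ord (lam i) = l i) ∧
      (∑ i, lam i * X i) ≠ 0 ∧ ord (∑ i, lam i * X i) = k := by
  set i0 : Fin r := ⟨0, by omega⟩ with hi0
  have hrC : ((r : ℂ) - 1) ≠ 0 := by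
    have h1 : (r:ℂ) - 1 = ((r - 1 : ℕ) : ℂ) := by
      push_cast [Nat.cast_sub (by omega : 1 ≤ r)]; ring
    rw [h1]
    exact_mod_cast (by omega : r - 1 ≠ 0)
  have h2rC : (2 * ((r : ℂ) - 1)) ≠ 0 := mul_ne_zero two_ne_zero hrC
  set c : Fin r → ℂ := fun i => (orc (X i))⁻¹ * (2 * ((r : ℂ) - 1))⁻¹ with hc
  have horc : ∀ i, orc (X i) ≠ 0 := fun i => HahnSeries.coeff_order_eq_zero.not.2 (hX i)
  have hcne : ∀ i, c i ≠ 0 := fun i =>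
    mul_ne_zero (inv_ne_zero (horc i)) (inv_ne_zero h2rC)
  set S : Ktilde := ∑ i ∈ Finset.univ.erase i0, HahnSeries.single (l i) (c i) * X i with hS
  have hterm_ne : ∀ i, HahnSeries.single (l i) (c i) * X i ≠ 0 := fun i =>
    mul_ne_zero (HahnSeries.single_ne_zero (hcne i)) (hX i)
  have hterm_ord : ∀ i, (HahnSeries.single (l i) (c i) * X i).order = h := by
    intro i
    rw [HahnSeries.order_mul (HahnSeries.single_ne_zero (hcne i)) (hX i),
      HahnSeries.order_single (hcne i)]
    have := hh i; unfold ord at this; linarith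
  have hterm_coeff : ∀ i, (HahnSeries.single (l i) (c i) * X i).coeff h
      = (2 * ((r : ℂ) - 1))⁻¹ := by
    intro i
    have hhi : h = (X i).order + l i := by have := hh i; unfold ord at this; linarith
    rw [hhi, HahnSeries.coeff_single_mul_add]
    have h1 : (X i).coeff (X i).order = orc (X i) := rfl
    rw [h1]
    calc c i * orc (X i) = (orc (X i))⁻¹ * orc (X i) * (2*((r:ℂ)-1))⁻¹ := by rw [hc]; ring
      _ = (2*((r:ℂ)-1))⁻¹ := by rw [inv_mul_cancel₀ (horc i), one_mul]
  have hScoeff_gen : ∀ g, S.coeff g =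
      ∑ i ∈ Finset.univ.erase i0, (HahnSeries.single (l i) (c i) * X i).coeff g := by
    intro g
    rw [hS]
    exact map_sum (HahnSeries.coeff.addMonoidHom g) _ _
  have hSlow : ∀ g, g < h → S.coeff g = 0 := by
    intro g hg
    rw [hScoeff_gen]
    exact Finset.sum_eq_zero fun i _ =>
      HahnSeries.coeff_eq_zero_of_lt_order (by rw [hterm_ord i]; exact hg)
  have hcard : (Finset.univ.erase i0).card = r - 1 := by
    rw [Finset.card_erase_of_mem (Finset.mem_univ _), Finset.card_univ, Fintype.card_fin]
  have hScoeff : S.coeff h = ((r : ℂ) - 1) * (2 * ((r : ℂ) - 1))⁻¹ := by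
    rw [hScoeff_gen, Finset.sum_congr rfl (fun i _ => hterm_coeff i), Finset.sum_const,
      hcard, nsmul_eq_mul]
    congr 1
    push_cast [Nat.cast_sub (by omega : 1 ≤ r)]
    ring
  have hShalf : S.coeff h = 2⁻¹ := by
    rw [hScoeff, mul_inv, ← mul_assoc, mul_comm ((r:ℂ)-1), mul_assoc,
      mul_inv_cancel₀ hrC, mul_one]
  -- T = τ^k - S
  set T : Ktilde := HahnSeries.single k 1 - S with hT
  have hTcoeff : T.coeff h ≠ 0 := by
    rw [hT, HahnSeries.coeff_sub, hShalf]
    rcases eq_or_lt_of_le hk with hkh | hkh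
    · rw [← hkh, HahnSeries.coeff_single_same]
      norm_num
    · rw [HahnSeries.coeff_single_of_ne (ne_of_lt hkh)]
      norm_num
  have hTne : T ≠ 0 := fun h0 => hTcoeff (by rw [h0]; simp)
  have hTlow : ∀ g, g < h → T.coeff g = 0 := by
    intro g hg
    rw [hT, HahnSeries.coeff_sub, hSlow g hg,
      HahnSeries.coeff_single_of_ne (ne_of_lt (lt_of_lt_of_le hg hk))]
    simp
  have hTord : T.order = h := by
    apply le_antisymm (HahnSeries.order_le_of_coeff_ne_zero hTcoeff)
    by_contra h'
    push_neg at h'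
    exact (HahnSeries.coeff_order_eq_zero.not.2 hTne) (hTlow _ h')
  -- λ
  set lam : Fin r → Ktilde := fun i =>
    if i = i0 then T * (X i0)⁻¹ else HahnSeries.single (l i) (c i) with hlam
  have hlam0 : lam i0 * X i0 = T := by
    have he : lam i0 = T * (X i0)⁻¹ := by rw [hlam]; simp
    rw [he, mul_assoc, inv_mul_cancel₀ (hX i0), mul_one]
  have hlam0ne : lam i0 ≠ 0 := by
    intro h0
    apply hTne
    rw [← hlam0, h0, zero_mul]
  have hsum : ∑ i, lam i * X i = HahnSeries.single k 1 := by
    rw [← Finset.add_sum_erase _ _ (Finset.mem_univ i0), hlam0]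
    have : ∑ i ∈ Finset.univ.erase i0, lam i * X i = S := by
      rw [hS]
      apply Finset.sum_congr rfl
      intro i hi
      rw [hlam]
      simp only [if_neg (Finset.ne_of_mem_erase hi)]
    rw [this, hT, sub_add_cancel]
  refine ⟨lam, ?_, ?_, ?_⟩
  · intro i
    by_cases hi : i = i0
    · subst hi
      refine ⟨hlam0ne, ?_⟩
      have hmul := HahnSeries.order_mul hlam0ne (hX i0)
      rw [hlam0, hTord] at hmul
      have h2 := hh i0
      unfold ord at h2 ⊢
      linarith
    · rw [hlam]
      simp only [if_neg hi]
      exact ⟨HahnSeries.single_ne_zero (hcne i),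
        by unfold ord; exact HahnSeries.order_single (hcne i)⟩
  · rw [hsum]
    exact HahnSeries.single_ne_zero one_ne_zero
  · rw [hsum]
    unfold ord
    exact HahnSeries.order_single one_ne_zero
end
end

section
/- Let X₁, ..., X_r, Z₁, ..., Z_s be nonzero Puiseux series with orders x₁,...,x_r and z₁,...,z_s, and let l₁,...,l_r, m₁,...,m_s, k be reals with h := x₁+l₁ = ... = x_r+l_r ≤ k and mⱼ + zⱼ > h for all j, where r ≥ 2. Given arbitrary μ₁,...,μ_s of orders m₁,...,m_s, there exist λ₁,...,λ_r of orders l₁,...,l_r such that ord(λ₁X₁ + ... + λ_rX_r + μ₁Z₁ + ... + μ_sZ_s) = k. -/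
open scoped Classical

noncomputable section

open HahnSeries in
lemma orc_eq' (x : Ktilde) : orc x = x.leadingCoeff := by
  by_cases hx : x = 0
  · simp [hx, orc, leadingCoeff_zero]
  · rw [orc, leadingCoeff_eq]

lemma sum_coeff' {α} (s : Finset α) (f : α → Ktilde) (a : ℝ) :
    (∑ i ∈ s, f i).coeff a = ∑ i ∈ s, (f i).coeff a := by
  induction s using Finset.cons_induction with
  | empty => simp
  | cons i s hi ih => rw [Finset.sum_cons, Finset.sum_cons, HahnSeries.coeff_add, ih]

lemma ord_eq_of_coeff' (x : Ktilde) (h : ℝ) (hc : x.coeff h ≠ 0)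
    (hb : ∀ g < h, x.coeff g = 0) : x.order = h := by
  have hx : x ≠ 0 := fun h0 => by simp [h0] at hc
  refine le_antisymm (HahnSeries.order_le_of_coeff_ne_zero hc) ?_
  by_contra hlt
  exact hx (HahnSeries.coeff_order_eq_zero.mp (hb _ (lt_of_not_ge hlt)))

theorem exists_coeffs_sum_order_eq_with_higher_terms {r s : ℕ} (hr : 2 ≤ r)
    (X : Fin r → Ktilde) (hX : ∀ i, X i ≠ 0)
    (Z : Fin s → Ktilde) (hZ : ∀ j, Z j ≠ 0)
    (l : Fin r → ℝ) (m : Fin s → ℝ) (h k : ℝ)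
    (hh : ∀ i, ord (X i) + l i = h) (hk : h ≤ k)
    (hz : ∀ j, m j + ord (Z j) > h)
    (mu : Fin s → Ktilde) (hmu : ∀ j, mu j ≠ 0 ∧ ord (mu j) = m j) :
    ∃ lam : Fin r → Ktilde,
      (∀ i, lam i ≠ 0 ∧ ord (lam i) = l i) ∧
      (∑ i, lam i * X i) + (∑ j, mu j * Z j) ≠ 0 ∧
      ord ((∑ i, lam i * X i) + (∑ j, mu j * Z j)) = k := by
  classical
  have hr0 : 0 < r := by omega
  have hr1 : 1 < r := by omega
  set i0 : Fin r := ⟨0, hr0⟩ with hi0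
  set i1 : Fin r := ⟨1, hr1⟩ with hi1
  have hne : i1 ≠ i0 := by simp [hi0, hi1, Fin.ext_iff]
  -- leading coefficients nonzero
  have horc : ∀ i, orc (X i) ≠ 0 := fun i => by
    rw [orc_eq']; exact HahnSeries.leadingCoeff_ne_zero.mpr (hX i)
  -- the delta at h of single k 1
  set δ : ℂ := if (h : ℝ) = k then 1 else 0 with hδ
  set S : ℂ := ∑ i ∈ ((Finset.univ.erase i0).erase i1), orc (X i) with hS
  set a : ℂ := orc (X i1) with ha
  set t : ℂ := if δ - S - a = 0 then 2 else 1 with ht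
  have ht0 : t ≠ 0 := by
    rw [ht]; split <;> norm_num
  have htgood : δ - S - t * a ≠ 0 := by
    rw [ht]; split
    · rename_i h0
      intro h2
      have : a = 0 := by ring_nf at h0 h2 ⊢; linear_combination h0 - h2
      exact horc i1 this
    · rename_i h0
      simpa using h0
  set c : Fin r → ℂ := fun i => if i = i1 then t else 1 with hc
  have hc0 : ∀ i, c i ≠ 0 := fun i => by
    rw [hc]; dsimp only; split
    · exact ht0
    · norm_num
  -- the terms for i ≠ i0
  set lam' : Fin r → Ktilde := fun i => HahnSeries.single (l i) (c i) with hlam'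
  have hlam'ne : ∀ i, lam' i ≠ 0 := fun i => by
    simp [hlam', HahnSeries.single_ne_zero (hc0 i)]
  have hlam'ord : ∀ i, ord (lam' i) = l i := fun i => by
    simp [hlam', ord, HahnSeries.order_single (hc0 i)]
  -- orders of products
  have hprod : ∀ i, (lam' i * X i).order = h := by
    intro i
    rw [HahnSeries.order_mul (hlam'ne i) (hX i)]
    have := hlam'ord i
    have := hh i
    simp only [ord] at *
    linarith
  have hprodcoeff : ∀ i, (lam' i * X i).coeff h = c i * orc (X i) := by
    intro i
    have h1 := HahnSeries.coeff_mul_order_add_order (lam' i) (X i)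
    have h2 : (lam' i).order + (X i).order = h := by
      have := hlam'ord i; have := hh i; simp only [ord] at *; linarith
    rw [h2] at h1
    rw [h1, ← orc_eq' (lam' i), ← orc_eq' (X i)]
    congr 1
    simp [orc, hlam'ord, hlam', HahnSeries.order_single (hc0 i),
      HahnSeries.coeff_single_same]
  have hmuZne : ∀ j, mu j * Z j ≠ 0 := fun j =>
    mul_ne_zero (hmu j).1 (hZ j)
  have hmuZord : ∀ j, h < (mu j * Z j).order := by
    intro j
    rw [HahnSeries.order_mul (hmu j).1 (hZ j)]
    have := (hmu j).2
    have := hz j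
    simp only [ord] at *
    linarith
  -- define W
  set W : Ktilde := HahnSeries.single k 1 - (∑ i ∈ Finset.univ.erase i0, lam' i * X i)
      - (∑ j, mu j * Z j) with hW
  -- coefficient of W at h
  have hWcoeff : W.coeff h = δ - S - t * a := by
    rw [hW]
    simp only [HahnSeries.coeff_sub, sum_coeff']
    have e1 : (HahnSeries.single k (1:ℂ)).coeff h = δ := by
      rw [HahnSeries.coeff_single, hδ]
    have e2 : ∀ j ∈ Finset.univ, (mu j * Z j).coeff h = 0 := fun j _ =>
      HahnSeries.coeff_eq_zero_of_lt_order (hmuZord j)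
    rw [e1, Finset.sum_congr rfl e2, Finset.sum_const_zero, sub_zero]
    have e3 : ∀ i ∈ Finset.univ.erase i0, (lam' i * X i).coeff h = c i * orc (X i) :=
      fun i _ => hprodcoeff i
    rw [Finset.sum_congr rfl e3]
    have hmem : i1 ∈ Finset.univ.erase i0 := Finset.mem_erase.mpr ⟨hne, Finset.mem_univ _⟩
    rw [← Finset.add_sum_erase _ _ hmem]
    have e4 : ∀ i ∈ (Finset.univ.erase i0).erase i1, c i * orc (X i) = orc (X i) := by
      intro i hi
      have : i ≠ i1 := (Finset.mem_erase.mp hi).1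
      simp [hc, this]
    rw [Finset.sum_congr rfl e4, ← hS]
    have : c i1 = t := by simp [hc]
    rw [this, ← ha]
    ring
  have hWc0 : W.coeff h ≠ 0 := hWcoeff ▸ htgood
  have hWne : W ≠ 0 := fun h0 => by simp [h0] at hWc0
  -- coefficients of W below h vanish
  have hWbelow : ∀ g < h, W.coeff g = 0 := by
    intro g hg
    rw [hW]
    simp only [HahnSeries.coeff_sub, sum_coeff']
    have e1 : (HahnSeries.single k (1:ℂ)).coeff g = 0 := by
      apply HahnSeries.coeff_single_of_ne
      intro hgk; rw [hgk] at hg; linarith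
    have e2 : ∀ j ∈ Finset.univ, (mu j * Z j).coeff g = 0 := fun j _ =>
      HahnSeries.coeff_eq_zero_of_lt_order (lt_trans hg (hmuZord j))
    have e3 : ∀ i ∈ Finset.univ.erase i0, (lam' i * X i).coeff g = 0 := fun i _ =>
      HahnSeries.coeff_eq_zero_of_lt_order (by rw [hprod i]; exact hg)
    rw [e1, Finset.sum_congr rfl e2, Finset.sum_congr rfl e3]
    simp
  have hWord : W.order = h := ord_eq_of_coeff' W h hWc0 hWbelow
  -- define lam
  set lam : Fin r → Ktilde := fun i => if i = i0 then W * (X i0)⁻¹ else lam' i with hlam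
  have hlam0 : lam i0 = W * (X i0)⁻¹ := by simp [hlam]
  have hlam0ne : lam i0 ≠ 0 := by
    rw [hlam0]
    exact mul_ne_zero hWne (inv_ne_zero (hX i0))
  have hkey : lam i0 * X i0 = W := by
    rw [hlam0, mul_assoc, inv_mul_cancel₀ (hX i0), mul_one]
  have hlam0ord : ord (lam i0) = l i0 := by
    have h1 : (lam i0 * X i0).order = (lam i0).order + (X i0).order :=
      HahnSeries.order_mul hlam0ne (hX i0)
    rw [hkey, hWord] at h1
    have h2 := hh i0
    simp only [ord] at *
    linarith
  refine ⟨lam, ?_, ?_⟩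
  · intro i
    by_cases hi : i = i0
    · subst hi; exact ⟨hlam0ne, hlam0ord⟩
    · have : lam i = lam' i := by simp [hlam, hi]
      rw [this]
      exact ⟨hlam'ne i, hlam'ord i⟩
  · have hsum : (∑ i, lam i * X i) + (∑ j, mu j * Z j) = HahnSeries.single k 1 := by
      have hmem : i0 ∈ (Finset.univ : Finset (Fin r)) := Finset.mem_univ _
      rw [← Finset.add_sum_erase _ _ hmem, hkey]
      have : ∀ i ∈ Finset.univ.erase i0, lam i * X i = lam' i * X i := by
        intro i hi
        have hi' : i ≠ i0 := (Finset.mem_erase.mp hi).1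
        simp [hlam, hi']
      rw [Finset.sum_congr rfl this, hW]
      ring
    rw [hsum]
    constructor
    · exact HahnSeries.single_ne_zero one_ne_zero
    · exact HahnSeries.order_single one_ne_zero
end
end

section
/- Let A₁, A₂, B₂, B₃, H, Y be nonzero Puiseux series of orders a, a, b, b, h, y respectively, and let t, z be reals with t > b, h > b, z > a, y > a. Then there exist Puiseux series λ₁, λ₂, λ₃, each of order 0, such that ord(λ₁A₁ + λ₂A₂ + λ₃Y) = z and ord(λ₁H + λ₂B₂ + λ₃B₃) = t. -/
open scoped Classical

noncomputable section

lemma ord_ge {x : Ktilde} (hx : x ≠ 0) {c : ℝ} (h : ∀ d < c, x.coeff d = 0) :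
    c ≤ x.order := by
  by_contra hc
  push_neg at hc
  exact (mt HahnSeries.coeff_order_eq_zero.mp hx) (h _ hc)

lemma ord_add {f g : Ktilde} (hf : f ≠ 0) (hg : ∀ d ≤ f.order, g.coeff d = 0) :
    f + g ≠ 0 ∧ (f + g).order = f.order := by
  have hco : (f + g).coeff f.order ≠ 0 := by
    simp [HahnSeries.coeff_add, hg _ le_rfl, (mt HahnSeries.coeff_order_eq_zero.mp hf)]
  refine ⟨HahnSeries.ne_zero_of_coeff_ne_zero hco, le_antisymm
    (HahnSeries.order_le_of_coeff_ne_zero hco) (ord_ge (HahnSeries.ne_zero_of_coeff_ne_zero hco)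
      fun d hd => ?_)⟩
  simp [HahnSeries.coeff_add, HahnSeries.coeff_eq_zero_of_lt_order hd, hg d hd.le]

theorem remark_quad_sbar (A1 A2 B2 B3 H Y : Ktilde)
    (hA1 : A1 ≠ 0) (hA2 : A2 ≠ 0) (hB2 : B2 ≠ 0) (hB3 : B3 ≠ 0)
    (hH : H ≠ 0) (hY : Y ≠ 0)
    (a b h y t z : ℝ)
    (ha1 : ord A1 = a) (ha2 : ord A2 = a)
    (hb2 : ord B2 = b) (hb3 : ord B3 = b)
    (hh : ord H = h) (hy : ord Y = y)
    (htb : t > b) (hhb : h > b) (hza : z > a) (hya : y > a) :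
    ∃ lam1 lam2 lam3 : Ktilde,
      lam1 ≠ 0 ∧ lam2 ≠ 0 ∧ lam3 ≠ 0 ∧
      ord lam1 = 0 ∧ ord lam2 = 0 ∧ ord lam3 = 0 ∧
      lam1 * A1 + lam2 * A2 + lam3 * Y ≠ 0 ∧
      ord (lam1 * A1 + lam2 * A2 + lam3 * Y) = z ∧
      lam1 * H + lam2 * B2 + lam3 * B3 ≠ 0 ∧
      ord (lam1 * H + lam2 * B2 + lam3 * B3) = t := by
  classical
  -- choose a coefficient c ≠ 0 with c ≠ Y.coeff z
  obtain ⟨c, hc0, hcy⟩ : ∃ c : ℂ, c ≠ 0 ∧ c ≠ Y.coeff z := by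
    by_cases hYc : Y.coeff z = 1
    · exact ⟨2, by norm_num, by rw [hYc]; norm_num⟩
    · exact ⟨1, one_ne_zero, fun hc => hYc hc.symm⟩
  simp only [ord] at ha1 ha2 hb2 hb3 hh hy
  set S : Ktilde := HahnSeries.single z c - Y with hSdef
  set T : Ktilde := HahnSeries.single t 1 - B3 with hTdef
  have hS0 : S ≠ 0 := by
    apply HahnSeries.ne_zero_of_coeff_ne_zero (g := z)
    simp [hSdef, HahnSeries.coeff_single_same, sub_ne_zero.mpr hcy]
  have hT0 : T ≠ 0 := by
    apply HahnSeries.ne_zero_of_coeff_ne_zero (g := b)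
    have : (HahnSeries.single t (1:ℂ)).coeff b = 0 :=
      HahnSeries.coeff_single_of_ne (ne_of_lt htb)
    have hB3c : B3.coeff b ≠ 0 := by
      rw [← hb3]; exact mt HahnSeries.coeff_order_eq_zero.mp hB3
    simp [hTdef, this, hB3c]
  -- order of S is > a
  have hSord : a < S.order := by
    refine lt_of_lt_of_le (lt_min hza hya) (ord_ge hS0 fun d hd => ?_)
    have h1 : (HahnSeries.single z c).coeff d = 0 :=
      HahnSeries.coeff_single_of_ne (ne_of_lt (lt_of_lt_of_le hd (min_le_left _ _)))
    have h2 : Y.coeff d = 0 :=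
      HahnSeries.coeff_eq_zero_of_lt_order (by rw [hy]; exact lt_of_lt_of_le hd (min_le_right _ _))
    simp [hSdef, h1, h2]
  -- order of T is exactly b
  have hTord : T.order = b := by
    refine le_antisymm (HahnSeries.order_le_of_coeff_ne_zero ?_) (ord_ge hT0 fun d hd => ?_)
    · have h1 : (HahnSeries.single t (1:ℂ)).coeff b = 0 :=
        HahnSeries.coeff_single_of_ne (ne_of_lt htb)
      have hB3c : B3.coeff b ≠ 0 := by
        rw [← hb3]; exact mt HahnSeries.coeff_order_eq_zero.mp hB3
      simp [hTdef, h1, hB3c]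
    · have h1 : (HahnSeries.single t (1:ℂ)).coeff d = 0 :=
        HahnSeries.coeff_single_of_ne (ne_of_lt (hd.trans htb))
      have h2 : B3.coeff d = 0 :=
        HahnSeries.coeff_eq_zero_of_lt_order (by rw [hb3]; exact hd)
      simp [hTdef, h1, h2]
  -- the determinant D = A1*B2 - A2*H
  set D : Ktilde := A1 * B2 - A2 * H with hDdef
  have hA1B2 : (A1 * B2) ≠ 0 := mul_ne_zero hA1 hB2
  have hA1B2o : (A1 * B2).order = a + b := by
    rw [HahnSeries.order_mul hA1 hB2, ha1, hb2]
  have hDaux : A1 * B2 + -(A2 * H) ≠ 0 ∧ (A1 * B2 + -(A2 * H)).order = (A1 * B2).order := by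
    refine ord_add hA1B2 fun d hd => ?_
    rw [HahnSeries.coeff_neg, HahnSeries.coeff_eq_zero_of_lt_order, neg_zero]
    rw [HahnSeries.order_mul hA2 hH, ha2, hh]
    calc d ≤ a + b := by rwa [hA1B2o] at hd
    _ < a + h := by linarith
  have hDeq : D = A1 * B2 + -(A2 * H) := by rw [hDdef]; ring
  have hD0 : D ≠ 0 := by rw [hDeq]; exact hDaux.1
  have hDord : D.order = a + b := by rw [hDeq, hDaux.2, hA1B2o]
  -- order of D⁻¹
  have hDinv0 : D⁻¹ ≠ 0 := inv_ne_zero hD0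
  have hDinvord : (D⁻¹).order = -(a + b) := by
    have h1 : (D * D⁻¹).order = 0 := by rw [mul_inv_cancel₀ hD0, HahnSeries.order_one]
    rw [HahnSeries.order_mul hD0 hDinv0, hDord] at h1
    linarith
  -- the numerators
  set N1 : Ktilde := S * B2 - A2 * T with hN1def
  set N2 : Ktilde := A1 * T - H * S with hN2def
  have hA2T : A2 * T ≠ 0 := mul_ne_zero hA2 hT0
  have hA2To : (A2 * T).order = a + b := by
    rw [HahnSeries.order_mul hA2 hT0, ha2, hTord]
  have hN1aux : -(A2 * T) + S * B2 ≠ 0 ∧ (-(A2 * T) + S * B2).order = (-(A2 * T)).order := by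
    refine ord_add (neg_ne_zero.mpr hA2T) fun d hd => ?_
    rw [HahnSeries.order_neg, hA2To] at hd
    refine HahnSeries.coeff_eq_zero_of_lt_order ?_
    rw [HahnSeries.order_mul hS0 hB2, hb2]
    calc d ≤ a + b := hd
    _ < S.order + b := by linarith
  have hN1eq : N1 = -(A2 * T) + S * B2 := by rw [hN1def]; ring
  have hN10 : N1 ≠ 0 := by rw [hN1eq]; exact hN1aux.1
  have hN1ord : N1.order = a + b := by
    rw [hN1eq, hN1aux.2, HahnSeries.order_neg, hA2To]
  have hA1T : A1 * T ≠ 0 := mul_ne_zero hA1 hT0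
  have hA1To : (A1 * T).order = a + b := by
    rw [HahnSeries.order_mul hA1 hT0, ha1, hTord]
  have hN2aux : A1 * T + -(H * S) ≠ 0 ∧ (A1 * T + -(H * S)).order = (A1 * T).order := by
    refine ord_add hA1T fun d hd => ?_
    rw [hA1To] at hd
    rw [HahnSeries.coeff_neg, HahnSeries.coeff_eq_zero_of_lt_order, neg_zero]
    rw [HahnSeries.order_mul hH hS0, hh]
    calc d ≤ a + b := hd
    _ < h + S.order := by linarith
  have hN2eq : N2 = A1 * T + -(H * S) := by rw [hN2def]; ring
  have hN20 : N2 ≠ 0 := by rw [hN2eq]; exact hN2aux.1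
  have hN2ord : N2.order = a + b := by rw [hN2eq, hN2aux.2, hA1To]
  -- the lambdas
  refine ⟨N1 / D, N2 / D, 1, div_ne_zero hN10 hD0, div_ne_zero hN20 hD0, one_ne_zero,
    ?_, ?_, ?_, ?_, ?_, ?_, ?_⟩
  · show (N1 / D).order = 0
    rw [div_eq_mul_inv, HahnSeries.order_mul hN10 hDinv0, hN1ord, hDinvord]; ring
  · show (N2 / D).order = 0
    rw [div_eq_mul_inv, HahnSeries.order_mul hN20 hDinv0, hN2ord, hDinvord]; ring
  · show (1:Ktilde).order = 0
    exact HahnSeries.order_one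
  all_goals {
    have key1 : N1 / D * A1 + N2 / D * A2 + 1 * Y = HahnSeries.single z c := by
      have : N1 * A1 + N2 * A2 = S * D := by rw [hN1def, hN2def, hDdef]; ring
      field_simp
      linear_combination this + D * hSdef
    have key2 : N1 / D * H + N2 / D * B2 + 1 * B3 = HahnSeries.single t 1 := by
      have : N1 * H + N2 * B2 = T * D := by rw [hN1def, hN2def, hDdef]; ring
      field_simp
      linear_combination this + D * hTdef
    first
    | (rw [key1]; exact HahnSeries.single_ne_zero hc0)
    | (show ord _ = z; rw [key1]; exact HahnSeries.order_single hc0)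
    | (rw [key2]; exact HahnSeries.single_ne_zero one_ne_zero)
    | (show ord _ = t; rw [key2]; exact HahnSeries.order_single one_ne_zero)
  }
end
end

section
/- Let A be a 4×4 real matrix with nonnegative entries such that A_{1,1}=A_{1,2}=A_{1,3}=0 and A_{2,4}=A_{3,4}=A_{4,4}=0. If A is tropically singular, then there exist two pairs of entries of the 3×3 submatrix A_{[2,3,4],[1,2,3]}, each pair consisting of two entries in distinct rows and distinct columns, such that the two pairs are not identical and both pairs achieve the minimum sum among all such pairs. -/
open scoped Classical

noncomputable section

def psetF (f : Fin 4 → Fin 4) : Finset (Fin 3 × Fin 3) :=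
  (Finset.univ.filter fun k : Fin 3 => f k.succ ≠ 3).image
    fun k => (k, ⟨(f k.succ).val % 3, Nat.mod_lt _ (by decide)⟩)

def perm4list : List (Fin 4 → Fin 4) :=
  [![0,1,2,3], ![0,1,3,2], ![0,2,1,3], ![0,2,3,1], ![0,3,1,2], ![0,3,2,1], ![1,0,2,3], ![1,0,3,2], ![1,2,0,3], ![1,2,3,0], ![1,3,0,2], ![1,3,2,0], ![2,0,1,3], ![2,0,3,1], ![2,1,0,3], ![2,1,3,0], ![2,3,0,1], ![2,3,1,0], ![3,0,1,2], ![3,0,2,1], ![3,1,0,2], ![3,1,2,0], ![3,2,0,1], ![3,2,1,0]]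

lemma mem_perm4list : ∀ σ : Equiv.Perm (Fin 4), ⇑σ ∈ perm4list := by decide

lemma psetF_inj : ∀ σ τ : Equiv.Perm (Fin 4), σ 0 ≠ 3 → τ 0 ≠ 3 →
    psetF ⇑σ = psetF ⇑τ → σ = τ := by decide

lemma decomp (A : Matrix (Fin 4) (Fin 4) ℝ)
    (h11 : A 0 0 = 0) (h12 : A 0 1 = 0) (h13 : A 0 2 = 0)
    (h24 : A 1 3 = 0) (h34 : A 2 3 = 0) (h44 : A 3 3 = 0)
    (σ : Equiv.Perm (Fin 4)) :
    (∃ π : Equiv.Perm (Fin 3), ∑ i, A i (σ i) =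
        A 0 3 + ∑ k : Fin 3, A.submatrix ![1,2,3] ![0,1,2] k (π k))
    ∨ (σ 0 ≠ 3 ∧ ∃ a a' c c' : Fin 3, a ≠ a' ∧ c ≠ c' ∧
        psetF ⇑σ = {(a,c),(a',c')} ∧
        ∑ i, A i (σ i) = A.submatrix ![1,2,3] ![0,1,2] a c +
          A.submatrix ![1,2,3] ![0,1,2] a' c') := by
  have hm := mem_perm4list σ
  simp only [perm4list, List.mem_cons, List.not_mem_nil, or_false] at hm
  rcases hm with h|h|h|h|h|h|h|h|h|h|h|h|h|h|h|h|h|h|h|h|h|h|h|h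
  · exact Or.inr ⟨by rw [h]; decide, 0, 1, 1, 2, by decide, by decide, by rw [h]; decide, by simp [Fin.sum_univ_four, Fin.sum_univ_three, h, Matrix.submatrix_apply, Equiv.coe_fn_mk, h11, h12, h13, h24, h34, h44] <;> ring⟩
  · exact Or.inr ⟨by rw [h]; decide, 0, 2, 1, 2, by decide, by decide, by rw [h]; decide, by simp [Fin.sum_univ_four, Fin.sum_univ_three, h, Matrix.submatrix_apply, Equiv.coe_fn_mk, h11, h12, h13, h24, h34, h44] <;> ring⟩
  · exact Or.inr ⟨by rw [h]; decide, 0, 1, 2, 1, by decide, by decide, by rw [h]; decide, by simp [Fin.sum_univ_four, Fin.sum_univ_three, h, Matrix.submatrix_apply, Equiv.coe_fn_mk, h11, h12, h13, h24, h34, h44] <;> ring⟩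
  · exact Or.inr ⟨by rw [h]; decide, 0, 2, 2, 1, by decide, by decide, by rw [h]; decide, by simp [Fin.sum_univ_four, Fin.sum_univ_three, h, Matrix.submatrix_apply, Equiv.coe_fn_mk, h11, h12, h13, h24, h34, h44] <;> ring⟩
  · exact Or.inr ⟨by rw [h]; decide, 1, 2, 1, 2, by decide, by decide, by rw [h]; decide, by simp [Fin.sum_univ_four, Fin.sum_univ_three, h, Matrix.submatrix_apply, Equiv.coe_fn_mk, h11, h12, h13, h24, h34, h44] <;> ring⟩
  · exact Or.inr ⟨by rw [h]; decide, 1, 2, 2, 1, by decide, by decide, by rw [h]; decide, by simp [Fin.sum_univ_four, Fin.sum_univ_three, h, Matrix.submatrix_apply, Equiv.coe_fn_mk, h11, h12, h13, h24, h34, h44] <;> ring⟩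
  · exact Or.inr ⟨by rw [h]; decide, 0, 1, 0, 2, by decide, by decide, by rw [h]; decide, by simp [Fin.sum_univ_four, Fin.sum_univ_three, h, Matrix.submatrix_apply, Equiv.coe_fn_mk, h11, h12, h13, h24, h34, h44] <;> ring⟩
  · exact Or.inr ⟨by rw [h]; decide, 0, 2, 0, 2, by decide, by decide, by rw [h]; decide, by simp [Fin.sum_univ_four, Fin.sum_univ_three, h, Matrix.submatrix_apply, Equiv.coe_fn_mk, h11, h12, h13, h24, h34, h44] <;> ring⟩
  · exact Or.inr ⟨by rw [h]; decide, 0, 1, 2, 0, by decide, by decide, by rw [h]; decide, by simp [Fin.sum_univ_four, Fin.sum_univ_three, h, Matrix.submatrix_apply, Equiv.coe_fn_mk, h11, h12, h13, h24, h34, h44] <;> ring⟩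
  · exact Or.inr ⟨by rw [h]; decide, 0, 2, 2, 0, by decide, by decide, by rw [h]; decide, by simp [Fin.sum_univ_four, Fin.sum_univ_three, h, Matrix.submatrix_apply, Equiv.coe_fn_mk, h11, h12, h13, h24, h34, h44] <;> ring⟩
  · exact Or.inr ⟨by rw [h]; decide, 1, 2, 0, 2, by decide, by decide, by rw [h]; decide, by simp [Fin.sum_univ_four, Fin.sum_univ_three, h, Matrix.submatrix_apply, Equiv.coe_fn_mk, h11, h12, h13, h24, h34, h44] <;> ring⟩
  · exact Or.inr ⟨by rw [h]; decide, 1, 2, 2, 0, by decide, by decide, by rw [h]; decide, by simp [Fin.sum_univ_four, Fin.sum_univ_three, h, Matrix.submatrix_apply, Equiv.coe_fn_mk, h11, h12, h13, h24, h34, h44] <;> ring⟩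
  · exact Or.inr ⟨by rw [h]; decide, 0, 1, 0, 1, by decide, by decide, by rw [h]; decide, by simp [Fin.sum_univ_four, Fin.sum_univ_three, h, Matrix.submatrix_apply, Equiv.coe_fn_mk, h11, h12, h13, h24, h34, h44] <;> ring⟩
  · exact Or.inr ⟨by rw [h]; decide, 0, 2, 0, 1, by decide, by decide, by rw [h]; decide, by simp [Fin.sum_univ_four, Fin.sum_univ_three, h, Matrix.submatrix_apply, Equiv.coe_fn_mk, h11, h12, h13, h24, h34, h44] <;> ring⟩
  · exact Or.inr ⟨by rw [h]; decide, 0, 1, 1, 0, by decide, by decide, by rw [h]; decide, by simp [Fin.sum_univ_four, Fin.sum_univ_three, h, Matrix.submatrix_apply, Equiv.coe_fn_mk, h11, h12, h13, h24, h34, h44] <;> ring⟩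
  · exact Or.inr ⟨by rw [h]; decide, 0, 2, 1, 0, by decide, by decide, by rw [h]; decide, by simp [Fin.sum_univ_four, Fin.sum_univ_three, h, Matrix.submatrix_apply, Equiv.coe_fn_mk, h11, h12, h13, h24, h34, h44] <;> ring⟩
  · exact Or.inr ⟨by rw [h]; decide, 1, 2, 0, 1, by decide, by decide, by rw [h]; decide, by simp [Fin.sum_univ_four, Fin.sum_univ_three, h, Matrix.submatrix_apply, Equiv.coe_fn_mk, h11, h12, h13, h24, h34, h44] <;> ring⟩
  · exact Or.inr ⟨by rw [h]; decide, 1, 2, 1, 0, by decide, by decide, by rw [h]; decide, by simp [Fin.sum_univ_four, Fin.sum_univ_three, h, Matrix.submatrix_apply, Equiv.coe_fn_mk, h11, h12, h13, h24, h34, h44] <;> ring⟩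
  · exact Or.inl ⟨⟨![0,1,2], ![0,1,2], by decide, by decide⟩, by simp [Fin.sum_univ_four, Fin.sum_univ_three, h, Matrix.submatrix_apply, Equiv.coe_fn_mk, h11, h12, h13, h24, h34, h44] <;> ring⟩
  · exact Or.inl ⟨⟨![0,2,1], ![0,2,1], by decide, by decide⟩, by simp [Fin.sum_univ_four, Fin.sum_univ_three, h, Matrix.submatrix_apply, Equiv.coe_fn_mk, h11, h12, h13, h24, h34, h44] <;> ring⟩
  · exact Or.inl ⟨⟨![1,0,2], ![1,0,2], by decide, by decide⟩, by simp [Fin.sum_univ_four, Fin.sum_univ_three, h, Matrix.submatrix_apply, Equiv.coe_fn_mk, h11, h12, h13, h24, h34, h44] <;> ring⟩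
  · exact Or.inl ⟨⟨![1,2,0], ![2,0,1], by decide, by decide⟩, by simp [Fin.sum_univ_four, Fin.sum_univ_three, h, Matrix.submatrix_apply, Equiv.coe_fn_mk, h11, h12, h13, h24, h34, h44] <;> ring⟩
  · exact Or.inl ⟨⟨![2,0,1], ![1,2,0], by decide, by decide⟩, by simp [Fin.sum_univ_four, Fin.sum_univ_three, h, Matrix.submatrix_apply, Equiv.coe_fn_mk, h11, h12, h13, h24, h34, h44] <;> ring⟩
  · exact Or.inl ⟨⟨![2,1,0], ![2,1,0], by decide, by decide⟩, by simp [Fin.sum_univ_four, Fin.sum_univ_three, h, Matrix.submatrix_apply, Equiv.coe_fn_mk, h11, h12, h13, h24, h34, h44] <;> ring⟩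

def tupleList : List (Fin 3 × Fin 3 × Fin 3 × Fin 3) :=
  [(0,1,0,1), (0,1,0,2), (0,1,1,0), (0,1,1,2), (0,1,2,0), (0,1,2,1), (0,2,0,1), (0,2,0,2), (0,2,1,0), (0,2,1,2), (0,2,2,0), (0,2,2,1), (1,0,0,1), (1,0,0,2), (1,0,1,0), (1,0,1,2), (1,0,2,0), (1,0,2,1), (1,2,0,1), (1,2,0,2), (1,2,1,0), (1,2,1,2), (1,2,2,0), (1,2,2,1), (2,0,0,1), (2,0,0,2), (2,0,1,0), (2,0,1,2), (2,0,2,0), (2,0,2,1), (2,1,0,1), (2,1,0,2), (2,1,1,0), (2,1,1,2), (2,1,2,0), (2,1,2,1)]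

lemma mem_tupleList : ∀ a a' c c' : Fin 3, a ≠ a' → c ≠ c' →
    (a, a', c, c') ∈ tupleList := by decide

lemma surj (A : Matrix (Fin 4) (Fin 4) ℝ)
    (h11 : A 0 0 = 0) (h12 : A 0 1 = 0) (h13 : A 0 2 = 0)
    (h24 : A 1 3 = 0) (h34 : A 2 3 = 0) (h44 : A 3 3 = 0)
    (a a' c c' : Fin 3) (ha : a ≠ a') (hc : c ≠ c') :
    ∃ σ : Equiv.Perm (Fin 4), ∑ i, A i (σ i) =
      A.submatrix ![1,2,3] ![0,1,2] a c + A.submatrix ![1,2,3] ![0,1,2] a' c' := by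
  have hm := mem_tupleList a a' c c' ha hc
  simp only [tupleList, List.mem_cons, List.not_mem_nil, or_false, Prod.mk.injEq] at hm
  rcases hm with ⟨rfl,rfl,rfl,rfl⟩|⟨rfl,rfl,rfl,rfl⟩|⟨rfl,rfl,rfl,rfl⟩|⟨rfl,rfl,rfl,rfl⟩|⟨rfl,rfl,rfl,rfl⟩|⟨rfl,rfl,rfl,rfl⟩|⟨rfl,rfl,rfl,rfl⟩|⟨rfl,rfl,rfl,rfl⟩|⟨rfl,rfl,rfl,rfl⟩|⟨rfl,rfl,rfl,rfl⟩|⟨rfl,rfl,rfl,rfl⟩|⟨rfl,rfl,rfl,rfl⟩|⟨rfl,rfl,rfl,rfl⟩|⟨rfl,rfl,rfl,rfl⟩|⟨rfl,rfl,rfl,rfl⟩|⟨rfl,rfl,rfl,rfl⟩|⟨rfl,rfl,rfl,rfl⟩|⟨rfl,rfl,rfl,rfl⟩|⟨rfl,rfl,rfl,rfl⟩|⟨rfl,rfl,rfl,rfl⟩|⟨rfl,rfl,rfl,rfl⟩|⟨rfl,rfl,rfl,rfl⟩|⟨rfl,rfl,rfl,rfl⟩|⟨rfl,rfl,rfl,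rfl⟩|⟨rfl,rfl,rfl,rfl⟩|⟨rfl,rfl,rfl,rfl⟩|⟨rfl,rfl,rfl,rfl⟩|⟨rfl,rfl,rfl,rfl⟩|⟨rfl,rfl,rfl,rfl⟩|⟨rfl,rfl,rfl,rfl⟩|⟨rfl,rfl,rfl,rfl⟩|⟨rfl,rfl,rfl,rfl⟩|⟨rfl,rfl,rfl,rfl⟩|⟨rfl,rfl,rfl,rfl⟩|⟨rfl,rfl,rfl,rfl⟩|⟨rfl,rfl,rfl,rfl⟩
  · exact ⟨⟨![2,0,1,3], ![1,2,0,3], by decide, by decide⟩, by simp [Fin.sum_univ_four, Matrix.submatrix_apply, Equiv.coe_fn_mk, h11, h12, h13, h24, h34, h44] <;> ring⟩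
  · exact ⟨⟨![1,0,2,3], ![1,0,2,3], by decide, by decide⟩, by simp [Fin.sum_univ_four, Matrix.submatrix_apply, Equiv.coe_fn_mk, h11, h12, h13, h24, h34, h44] <;> ring⟩
  · exact ⟨⟨![2,1,0,3], ![2,1,0,3], by decide, by decide⟩, by simp [Fin.sum_univ_four, Matrix.submatrix_apply, Equiv.coe_fn_mk, h11, h12, h13, h24, h34, h44] <;> ring⟩
  · exact ⟨⟨![0,1,2,3], ![0,1,2,3], by decide, by decide⟩, by simp [Fin.sum_univ_four, Matrix.submatrix_apply, Equiv.coe_fn_mk, h11, h12, h13, h24, h34, h44] <;> ring⟩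
  · exact ⟨⟨![1,2,0,3], ![2,0,1,3], by decide, by decide⟩, by simp [Fin.sum_univ_four, Matrix.submatrix_apply, Equiv.coe_fn_mk, h11, h12, h13, h24, h34, h44] <;> ring⟩
  · exact ⟨⟨![0,2,1,3], ![0,2,1,3], by decide, by decide⟩, by simp [Fin.sum_univ_four, Matrix.submatrix_apply, Equiv.coe_fn_mk, h11, h12, h13, h24, h34, h44] <;> ring⟩
  · exact ⟨⟨![2,0,3,1], ![1,3,0,2], by decide, by decide⟩, by simp [Fin.sum_univ_four, Matrix.submatrix_apply, Equiv.coe_fn_mk, h11, h12, h13, h24, h34, h44] <;> ring⟩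
  · exact ⟨⟨![1,0,3,2], ![1,0,3,2], by decide, by decide⟩, by simp [Fin.sum_univ_four, Matrix.submatrix_apply, Equiv.coe_fn_mk, h11, h12, h13, h24, h34, h44] <;> ring⟩
  · exact ⟨⟨![2,1,3,0], ![3,1,0,2], by decide, by decide⟩, by simp [Fin.sum_univ_four, Matrix.submatrix_apply, Equiv.coe_fn_mk, h11, h12, h13, h24, h34, h44] <;> ring⟩
  · exact ⟨⟨![0,1,3,2], ![0,1,3,2], by decide, by decide⟩, by simp [Fin.sum_univ_four, Matrix.submatrix_apply, Equiv.coe_fn_mk, h11, h12, h13, h24, h34, h44] <;> ring⟩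
  · exact ⟨⟨![1,2,3,0], ![3,0,1,2], by decide, by decide⟩, by simp [Fin.sum_univ_four, Matrix.submatrix_apply, Equiv.coe_fn_mk, h11, h12, h13, h24, h34, h44] <;> ring⟩
  · exact ⟨⟨![0,2,3,1], ![0,3,1,2], by decide, by decide⟩, by simp [Fin.sum_univ_four, Matrix.submatrix_apply, Equiv.coe_fn_mk, h11, h12, h13, h24, h34, h44] <;> ring⟩
  · exact ⟨⟨![2,1,0,3], ![2,1,0,3], by decide, by decide⟩, by simp [Fin.sum_univ_four, Matrix.submatrix_apply, Equiv.coe_fn_mk, h11, h12, h13, h24, h34, h44] <;> ring⟩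
  · exact ⟨⟨![1,2,0,3], ![2,0,1,3], by decide, by decide⟩, by simp [Fin.sum_univ_four, Matrix.submatrix_apply, Equiv.coe_fn_mk, h11, h12, h13, h24, h34, h44] <;> ring⟩
  · exact ⟨⟨![2,0,1,3], ![1,2,0,3], by decide, by decide⟩, by simp [Fin.sum_univ_four, Matrix.submatrix_apply, Equiv.coe_fn_mk, h11, h12, h13, h24, h34, h44] <;> ring⟩
  · exact ⟨⟨![0,2,1,3], ![0,2,1,3], by decide, by decide⟩, by simp [Fin.sum_univ_four, Matrix.submatrix_apply, Equiv.coe_fn_mk, h11, h12, h13, h24, h34, h44] <;> ring⟩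
  · exact ⟨⟨![1,0,2,3], ![1,0,2,3], by decide, by decide⟩, by simp [Fin.sum_univ_four, Matrix.submatrix_apply, Equiv.coe_fn_mk, h11, h12, h13, h24, h34, h44] <;> ring⟩
  · exact ⟨⟨![0,1,2,3], ![0,1,2,3], by decide, by decide⟩, by simp [Fin.sum_univ_four, Matrix.submatrix_apply, Equiv.coe_fn_mk, h11, h12, h13, h24, h34, h44] <;> ring⟩
  · exact ⟨⟨![2,3,0,1], ![2,3,0,1], by decide, by decide⟩, by simp [Fin.sum_univ_four, Matrix.submatrix_apply, Equiv.coe_fn_mk, h11, h12, h13, h24, h34, h44] <;> ring⟩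
  · exact ⟨⟨![1,3,0,2], ![2,0,3,1], by decide, by decide⟩, by simp [Fin.sum_univ_four, Matrix.submatrix_apply, Equiv.coe_fn_mk, h11, h12, h13, h24, h34, h44] <;> ring⟩
  · exact ⟨⟨![2,3,1,0], ![3,2,0,1], by decide, by decide⟩, by simp [Fin.sum_univ_four, Matrix.submatrix_apply, Equiv.coe_fn_mk, h11, h12, h13, h24, h34, h44] <;> ring⟩
  · exact ⟨⟨![0,3,1,2], ![0,2,3,1], by decide, by decide⟩, by simp [Fin.sum_univ_four, Matrix.submatrix_apply, Equiv.coe_fn_mk, h11, h12, h13, h24, h34, h44] <;> ring⟩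
  · exact ⟨⟨![1,3,2,0], ![3,0,2,1], by decide, by decide⟩, by simp [Fin.sum_univ_four, Matrix.submatrix_apply, Equiv.coe_fn_mk, h11, h12, h13, h24, h34, h44] <;> ring⟩
  · exact ⟨⟨![0,3,2,1], ![0,3,2,1], by decide, by decide⟩, by simp [Fin.sum_univ_four, Matrix.submatrix_apply, Equiv.coe_fn_mk, h11, h12, h13, h24, h34, h44] <;> ring⟩
  · exact ⟨⟨![2,1,3,0], ![3,1,0,2], by decide, by decide⟩, by simp [Fin.sum_univ_four, Matrix.submatrix_apply, Equiv.coe_fn_mk, h11, h12, h13, h24, h34, h44] <;> ring⟩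
  · exact ⟨⟨![1,2,3,0], ![3,0,1,2], by decide, by decide⟩, by simp [Fin.sum_univ_four, Matrix.submatrix_apply, Equiv.coe_fn_mk, h11, h12, h13, h24, h34, h44] <;> ring⟩
  · exact ⟨⟨![2,0,3,1], ![1,3,0,2], by decide, by decide⟩, by simp [Fin.sum_univ_four, Matrix.submatrix_apply, Equiv.coe_fn_mk, h11, h12, h13, h24, h34, h44] <;> ring⟩
  · exact ⟨⟨![0,2,3,1], ![0,3,1,2], by decide, by decide⟩, by simp [Fin.sum_univ_four, Matrix.submatrix_apply, Equiv.coe_fn_mk, h11, h12, h13, h24, h34, h44] <;> ring⟩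
  · exact ⟨⟨![1,0,3,2], ![1,0,3,2], by decide, by decide⟩, by simp [Fin.sum_univ_four, Matrix.submatrix_apply, Equiv.coe_fn_mk, h11, h12, h13, h24, h34, h44] <;> ring⟩
  · exact ⟨⟨![0,1,3,2], ![0,1,3,2], by decide, by decide⟩, by simp [Fin.sum_univ_four, Matrix.submatrix_apply, Equiv.coe_fn_mk, h11, h12, h13, h24, h34, h44] <;> ring⟩
  · exact ⟨⟨![2,3,1,0], ![3,2,0,1], by decide, by decide⟩, by simp [Fin.sum_univ_four, Matrix.submatrix_apply, Equiv.coe_fn_mk, h11, h12, h13, h24, h34, h44] <;> ring⟩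
  · exact ⟨⟨![1,3,2,0], ![3,0,2,1], by decide, by decide⟩, by simp [Fin.sum_univ_four, Matrix.submatrix_apply, Equiv.coe_fn_mk, h11, h12, h13, h24, h34, h44] <;> ring⟩
  · exact ⟨⟨![2,3,0,1], ![2,3,0,1], by decide, by decide⟩, by simp [Fin.sum_univ_four, Matrix.submatrix_apply, Equiv.coe_fn_mk, h11, h12, h13, h24, h34, h44] <;> ring⟩
  · exact ⟨⟨![0,3,2,1], ![0,3,2,1], by decide, by decide⟩, by simp [Fin.sum_univ_four, Matrix.submatrix_apply, Equiv.coe_fn_mk, h11, h12, h13, h24, h34, h44] <;> ring⟩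
  · exact ⟨⟨![1,3,0,2], ![2,0,3,1], by decide, by decide⟩, by simp [Fin.sum_univ_four, Matrix.submatrix_apply, Equiv.coe_fn_mk, h11, h12, h13, h24, h34, h44] <;> ring⟩
  · exact ⟨⟨![0,3,1,2], ![0,2,3,1], by decide, by decide⟩, by simp [Fin.sum_univ_four, Matrix.submatrix_apply, Equiv.coe_fn_mk, h11, h12, h13, h24, h34, h44] <;> ring⟩

/-- Helper: the full-permutation case. -/
lemma fullcase (A : Matrix (Fin 4) (Fin 4) ℝ) (hnonneg : ∀ i j, 0 ≤ A i j) (t : ℝ)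
    (htle : ∀ a a' c c' : Fin 3, a ≠ a' → c ≠ c' →
      t ≤ A.submatrix ![1,2,3] ![0,1,2] a c + A.submatrix ![1,2,3] ![0,1,2] a' c')
    (π : Equiv.Perm (Fin 3))
    (hsum : t = A 0 3 + ∑ k : Fin 3, A.submatrix ![1,2,3] ![0,1,2] k (π k)) :
    ∃ i i' j j' p p' q q' : Fin 3,
      i ≠ i' ∧ j ≠ j' ∧ p ≠ p' ∧ q ≠ q' ∧
      ({(i, j), (i', j')} : Set (Fin 3 × Fin 3)) ≠ {(p, q), (p', q')} ∧
      IsLeast {v | ∃ a a' c c' : Fin 3, a ≠ a' ∧ c ≠ c' ∧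
          v = A.submatrix ![1, 2, 3] ![0, 1, 2] a c +
              A.submatrix ![1, 2, 3] ![0, 1, 2] a' c'}
        (A.submatrix ![1, 2, 3] ![0, 1, 2] i j +
          A.submatrix ![1, 2, 3] ![0, 1, 2] i' j') ∧
      A.submatrix ![1, 2, 3] ![0, 1, 2] p q +
          A.submatrix ![1, 2, 3] ![0, 1, 2] p' q' =
        A.submatrix ![1, 2, 3] ![0, 1, 2] i j +
          A.submatrix ![1, 2, 3] ![0, 1, 2] i' j' := by
  set B := A.submatrix ![1,2,3] ![0,1,2] with hB
  have hsum3 : t = A 0 3 + (B 0 (π 0) + B 1 (π 1) + B 2 (π 2)) := by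
    rw [hsum, Fin.sum_univ_three]
  have hπ01 : π 0 ≠ π 1 := fun hcon => absurd (π.injective hcon) (by decide)
  have hπ02 : π 0 ≠ π 2 := fun hcon => absurd (π.injective hcon) (by decide)
  have hπ12 : π 1 ≠ π 2 := fun hcon => absurd (π.injective hcon) (by decide)
  have h01 := htle 0 1 (π 0) (π 1) (by decide) hπ01
  have h02 := htle 0 2 (π 0) (π 2) (by decide) hπ02
  have h12 := htle 1 2 (π 1) (π 2) (by decide) hπ12
  have n0 : 0 ≤ B 0 (π 0) := hnonneg _ _
  have n1 : 0 ≤ B 1 (π 1) := hnonneg _ _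
  have n2 : 0 ≤ B 2 (π 2) := hnonneg _ _
  have na : 0 ≤ A 0 3 := hnonneg 0 3
  have e1 : t = B 0 (π 0) + B 1 (π 1) := by linarith
  have e2 : t = B 0 (π 0) + B 2 (π 2) := by linarith
  refine ⟨0, 1, π 0, π 1, 0, 2, π 0, π 2, by decide, hπ01, by decide, hπ02, ?_, ?_, ?_⟩
  · intro hs
    have hmem : ((1 : Fin 3), π 1) ∈ ({(0, π 0), (2, π 2)} : Set (Fin 3 × Fin 3)) := by
      rw [← hs]; simp
    simp only [Set.mem_insert_iff, Set.mem_singleton_iff, Prod.ext_iff] at hmem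
    rcases hmem with ⟨h', _⟩ | ⟨h', _⟩ <;> exact absurd h' (by decide)
  · refine ⟨⟨0, 1, π 0, π 1, by decide, hπ01, rfl⟩, ?_⟩
    rintro v ⟨x, x', y, y', hx, hy, rfl⟩
    rw [← e1]
    exact htle x x' y y' hx hy
  · rw [← e1, ← e2]

theorem tropSingular_imp_two_min_pairs (A : Matrix (Fin 4) (Fin 4) ℝ)
    (hnonneg : ∀ i j, 0 ≤ A i j)
    (h11 : A 0 0 = 0) (h12 : A 0 1 = 0) (h13 : A 0 2 = 0)
    (h24 : A 1 3 = 0) (h34 : A 2 3 = 0) (h44 : A 3 3 = 0)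
    (hsing : TropSingular A) :
    ∃ i i' j j' p p' q q' : Fin 3,
      i ≠ i' ∧ j ≠ j' ∧ p ≠ p' ∧ q ≠ q' ∧
      ({(i, j), (i', j')} : Set (Fin 3 × Fin 3)) ≠ {(p, q), (p', q')} ∧
      IsLeast {v | ∃ a a' c c' : Fin 3, a ≠ a' ∧ c ≠ c' ∧
          v = A.submatrix ![1, 2, 3] ![0, 1, 2] a c +
              A.submatrix ![1, 2, 3] ![0, 1, 2] a' c'}
        (A.submatrix ![1, 2, 3] ![0, 1, 2] i j +
          A.submatrix ![1, 2, 3] ![0, 1, 2] i' j') ∧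
      A.submatrix ![1, 2, 3] ![0, 1, 2] p q +
          A.submatrix ![1, 2, 3] ![0, 1, 2] p' q' =
        A.submatrix ![1, 2, 3] ![0, 1, 2] i j +
          A.submatrix ![1, 2, 3] ![0, 1, 2] i' j' := by
  obtain ⟨σ, τ, hne, hσ, hτ⟩ := hsing
  have hfin : {v | ∃ ρ : Equiv.Perm (Fin 4), v = ∑ i, A i (ρ i)}.Finite := by
    have hrg : {v | ∃ ρ : Equiv.Perm (Fin 4), v = ∑ i, A i (ρ i)} =
        Set.range (fun ρ : Equiv.Perm (Fin 4) => ∑ i, A i (ρ i)) := by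
      ext v
      exact ⟨fun ⟨ρ, h⟩ => ⟨ρ, h.symm⟩, fun ⟨ρ, h⟩ => ⟨ρ, h.symm⟩⟩
    rw [hrg]; exact Set.finite_range _
  have hle : ∀ ρ : Equiv.Perm (Fin 4), tropDet A ≤ ∑ i, A i (ρ i) := by
    intro ρ
    unfold tropDet
    exact csInf_le hfin.bddBelow ⟨ρ, rfl⟩
  have htle : ∀ a a' c c' : Fin 3, a ≠ a' → c ≠ c' →
      tropDet A ≤ A.submatrix ![1,2,3] ![0,1,2] a c +
        A.submatrix ![1,2,3] ![0,1,2] a' c' := by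
    intro a a' c c' ha hc
    obtain ⟨ρ, hρ⟩ := surj A h11 h12 h13 h24 h34 h44 a a' c c' ha hc
    exact hρ ▸ hle ρ
  rcases decomp A h11 h12 h13 h24 h34 h44 σ with ⟨π, hπ⟩ |
    ⟨hσ0, a, a', c, c', ha, hc, hpsσ, hsσ⟩
  · exact fullcase A hnonneg (tropDet A) htle π (by rw [← hσ]; exact hπ)
  rcases decomp A h11 h12 h13 h24 h34 h44 τ with ⟨π, hπ⟩ |
    ⟨hτ0, p, p', q, q', hp, hq, hpsτ, hsτ⟩
  · exact fullcase A hnonneg (tropDet A) htle π (by rw [← hτ]; exact hπ)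
  have hps : psetF ⇑σ ≠ psetF ⇑τ := fun hcon => hne (psetF_inj σ τ hσ0 hτ0 hcon)
  have e1 : A.submatrix ![1,2,3] ![0,1,2] a c + A.submatrix ![1,2,3] ![0,1,2] a' c' =
      tropDet A := by rw [← hsσ, hσ]
  have e2 : A.submatrix ![1,2,3] ![0,1,2] p q + A.submatrix ![1,2,3] ![0,1,2] p' q' =
      tropDet A := by rw [← hsτ, hτ]
  refine ⟨a, a', c, c', p, p', q, q', ha, hc, hp, hq, ?_, ?_, ?_⟩
  · intro hs
    apply hps
    apply Finset.coe_injective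
    rw [hpsσ, hpsτ]
    simpa using hs
  · refine ⟨⟨a, a', c, c', ha, hc, rfl⟩, ?_⟩
    rintro v ⟨x, x', y, y', hx, hy, rfl⟩
    rw [e1]
    exact htle x x' y y' hx hy
  · rw [e1, e2]
end
end

section
/- Let A be a g×5 real matrix (g ≥ 2) of the block form: rows 1 and 2 are (v', u', r', 0, 0) and (v, u, r, 0, 0) respectively, and rows 3 through g have the form (0, 0, 0, *, *) where all starred entries and v, v', u, u', r, r' are ≥ 0. If A has tropical rank 3, then A has Kapranov rank 3. -/
open scoped Classical

set_option maxHeartbeats 2000000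
noncomputable section

def coeffHom (d : ℝ) : Ktilde →+ ℂ where
  toFun x := x.coeff d
  map_zero' := rfl
  map_add' x y := by simp [HahnSeries.coeff_add]

lemma prod_ne_zero_and_order {ι : Type*} (s : Finset ι) (f : ι → Ktilde)
    (h : ∀ i ∈ s, f i ≠ 0) :
    (∏ i ∈ s, f i) ≠ 0 ∧ (∏ i ∈ s, f i).order = ∑ i ∈ s, (f i).order := by
  classical
  induction s using Finset.induction_on with
  | empty => simp
  | @insert a s ha ih =>
    have hf := h a (Finset.mem_insert_self a s)
    have ih' := ih (fun i hi => h i (Finset.mem_insert_of_mem hi))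
    rw [Finset.prod_insert ha, Finset.sum_insert ha]
    exact ⟨mul_ne_zero hf ih'.1, by rw [HahnSeries.order_mul hf ih'.1, ih'.2]⟩

lemma det_ne_zero_of_lift {r : ℕ} (M : Matrix (Fin r) (Fin r) ℝ)
    (hns : ¬ TropSingular M)
    (F : Matrix (Fin r) (Fin r) Ktilde)
    (hF : ∀ i j, F i j ≠ 0 ∧ (F i j).order = M i j) :
    F.det ≠ 0 := by
  have hSfin : {v | ∃ σ : Equiv.Perm (Fin r), v = ∑ i, M i (σ i)}.Finite := by
    have : {v | ∃ σ : Equiv.Perm (Fin r), v = ∑ i, M i (σ i)} =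
        Set.range (fun σ : Equiv.Perm (Fin r) => ∑ i, M i (σ i)) := by
      ext v; simp [Set.mem_setOf_eq, eq_comm, Set.mem_range]
    rw [this]; exact Set.finite_range _
  have hSne : {v | ∃ σ : Equiv.Perm (Fin r), v = ∑ i, M i (σ i)}.Nonempty :=
    ⟨∑ i, M i ((1 : Equiv.Perm (Fin r)) i), ⟨1, rfl⟩⟩
  have hdmem : tropDet M ∈ {v | ∃ σ : Equiv.Perm (Fin r), v = ∑ i, M i (σ i)} :=
    Set.Nonempty.csInf_mem hSne hSfin
  obtain ⟨σ0, hσ0⟩ := hdmem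
  have huniq : ∀ τ : Equiv.Perm (Fin r), (∑ i, M i (τ i)) = tropDet M → τ = σ0 := by
    intro τ hτ
    by_contra hne'
    exact hns ⟨τ, σ0, hne', hτ, hσ0.symm⟩
  have hlb : ∀ τ : Equiv.Perm (Fin r), tropDet M ≤ ∑ i, M i (τ i) := fun τ =>
    csInf_le hSfin.bddBelow ⟨τ, rfl⟩
  have hterm : ∀ σ : Equiv.Perm (Fin r),
      (∏ i, F (σ i) i) ≠ 0 ∧ (∏ i, F (σ i) i).order = ∑ i, M i (σ⁻¹ i) := by
    intro σ
    obtain ⟨hp, ho⟩ := prod_ne_zero_and_order Finset.univ (fun i => F (σ i) i)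
      (fun i _ => (hF (σ i) i).1)
    refine ⟨hp, ?_⟩
    rw [ho]
    have h1 : ∑ i, (F (σ i) i).order = ∑ i, M (σ i) i := by
      apply Finset.sum_congr rfl
      intro i _
      exact (hF (σ i) i).2
    rw [h1]
    have := Equiv.sum_comp σ (fun i => M i (σ⁻¹ i))
    simp only [show ∀ x, σ⁻¹ (σ x) = x from fun x => σ.symm_apply_apply x] at this
    exact this
  have hT : ∀ σ : Equiv.Perm (Fin r),
      (((Equiv.Perm.sign σ : ℤ) : Ktilde) * ∏ i, F (σ i) i) ≠ 0 ∧
      (((Equiv.Perm.sign σ : ℤ) : Ktilde) * ∏ i, F (σ i) i).order = ∑ i, M i (σ⁻¹ i) := by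
    intro σ
    have hc : (((Equiv.Perm.sign σ : ℤ) : Ktilde)) ≠ 0 ∧
        (((Equiv.Perm.sign σ : ℤ) : Ktilde)).order = 0 := by
      rcases Int.units_eq_one_or (Equiv.Perm.sign σ) with h | h <;> rw [h] <;>
        simp [HahnSeries.order_neg]
    obtain ⟨hp, ho⟩ := hterm σ
    exact ⟨mul_ne_zero hc.1 hp,
      by rw [HahnSeries.order_mul hc.1 hp, hc.2, ho, zero_add]⟩
  have key : (F.det).coeff (tropDet M) ≠ 0 := by
    have hdc : (F.det).coeff (tropDet M) = ∑ σ : Equiv.Perm (Fin r),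
        ((((Equiv.Perm.sign σ : ℤ) : Ktilde)) * ∏ i, F (σ i) i).coeff (tropDet M) := by
      rw [Matrix.det_apply']
      exact map_sum (coeffHom (tropDet M)) _ _
    rw [hdc, Finset.sum_eq_single σ0⁻¹]
    · obtain ⟨hne0, hord⟩ := hT σ0⁻¹
      have heq : tropDet M =
          (((Equiv.Perm.sign σ0⁻¹ : ℤ) : Ktilde) * ∏ i, F (σ0⁻¹ i) i).order := by
        rw [hord]; simp only [inv_inv]; exact hσ0
      rw [heq]
      exact HahnSeries.coeff_order_eq_zero.not.2 hne0
    · intro σ _ hσ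
      obtain ⟨hne0, hord⟩ := hT σ
      apply HahnSeries.coeff_eq_zero_of_lt_order
      rw [hord]
      rcases lt_or_eq_of_le (hlb σ⁻¹) with h | h
      · exact h
      · exfalso
        apply hσ
        have h2 := huniq σ⁻¹ h.symm
        calc σ = σ⁻¹⁻¹ := (inv_inv σ).symm
        _ = σ0⁻¹ := by rw [h2]
    · intro h; exact absurd (Finset.mem_univ _) h
  intro h0
  rw [h0] at key
  exact key rfl

lemma ord_eq_of {x : Ktilde} {e : ℝ} (h : x.coeff e ≠ 0)
    (h' : ∀ f, f < e → x.coeff f = 0) : x ≠ 0 ∧ x.order = e := by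
  have hx : x ≠ 0 := by rintro rfl; exact h rfl
  refine ⟨hx, le_antisymm (HahnSeries.order_le_of_coeff_ne_zero h) ?_⟩
  by_contra hlt
  push_neg at hlt
  exact HahnSeries.coeff_order_eq_zero.not.2 hx (h' _ hlt)

lemma exists_good_lift {g : ℕ} (hg : 2 ≤ g) (A : Matrix (Fin g) (Fin 5) ℝ)
    (hnonneg : ∀ i j, 0 ≤ A i j)
    (h1 : ∀ i : Fin g, (i : ℕ) < 2 → A i 3 = 0 ∧ A i 4 = 0)
    (h2 : ∀ i : Fin g, 2 ≤ (i : ℕ) → A i 0 = 0 ∧ A i 1 = 0 ∧ A i 2 = 0) :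
    ∃ F : Matrix (Fin g) (Fin 5) Ktilde, IsLift F A ∧ F.rank ≤ 3 := by
  have hg0 : 0 < g := by omega
  have hg1 : 1 < g := by omega
  set r0 : Fin g := ⟨0, hg0⟩ with hr0
  set r1 : Fin g := ⟨1, hg1⟩ with hr1
  set Q : Matrix (Fin 3) (Fin 5) Ktilde := Matrix.of
    ![fun j => HahnSeries.single (A r0 j) (1 : ℂ),
      fun j => HahnSeries.single (A r1 j) (if (j : ℕ) = 4 then (2 : ℂ) else 1),
      fun j => HahnSeries.single 0 (if (j : ℕ) < 3 then (4 : ℂ) else 1)] with hQ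
  set P : Matrix (Fin g) (Fin 3) Ktilde := Matrix.of fun i k =>
    if (i : ℕ) = 0 then ![1, 0, 0] k
    else if (i : ℕ) = 1 then ![0, 1, 0] k
    else ![HahnSeries.single (A i 3) 2 - HahnSeries.single (A i 4) 1 - 1,
           HahnSeries.single (A i 4) 1 - HahnSeries.single (A i 3) 1, 1] k with hP
  refine ⟨P * Q, ?_, ?_⟩
  · intro i j
    have hmul : ∀ j : Fin 5, (P * Q) i j = P i 0 * Q 0 j + P i 1 * Q 1 j + P i 2 * Q 2 j := by
      intro j; rw [Matrix.mul_apply, Fin.sum_univ_three]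
    by_cases hi0 : (i : ℕ) = 0
    · have hieq : i = r0 := Fin.ext (by simp [hr0, hi0])
      have hPQ : (P * Q) i j = HahnSeries.single (A r0 j) (1 : ℂ) := by
        rw [hmul]; simp [hP, hQ, hi0]
      rw [hPQ, hieq]
      exact ⟨HahnSeries.single_ne_zero one_ne_zero,
        by rw [ord, HahnSeries.order_single one_ne_zero]⟩
    · by_cases hi1 : (i : ℕ) = 1
      · have hieq : i = r1 := Fin.ext (by simp [hr1, hi1])
        have hc : (if (j : ℕ) = 4 then (2 : ℂ) else 1) ≠ 0 := by split_ifs <;> norm_num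
        have hPQ : (P * Q) i j =
            HahnSeries.single (A r1 j) (if (j : ℕ) = 4 then (2 : ℂ) else 1) := by
          rw [hmul]; simp [hP, hQ, hi0, hi1]
        rw [hPQ, hieq]
        exact ⟨HahnSeries.single_ne_zero hc, by rw [ord, HahnSeries.order_single hc]⟩
      · have hi2 : 2 ≤ (i : ℕ) := by omega
        obtain ⟨e0, e1, e2⟩ := h2 i hi2
        obtain ⟨f03, f04⟩ := h1 r0 (by simp [hr0])
        obtain ⟨f13, f14⟩ := h1 r1 (by simp [hr1])
        have ha := hnonneg i 3
        have hb := hnonneg i 4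
        have hj : j = 0 ∨ j = 1 ∨ j = 2 ∨ j = 3 ∨ j = 4 := by fin_cases j <;> simp
        rcases hj with rfl | rfl | rfl | rfl | rfl
        · have key : (P * Q) i 0 ≠ 0 ∧ ((P * Q) i 0).order = 0 := by
            apply ord_eq_of
            · rw [hmul]
              simp [hP, hQ, hi0, hi1, sub_mul, one_mul,
                HahnSeries.single_mul_single, HahnSeries.coeff_add,
                HahnSeries.coeff_sub, HahnSeries.coeff_single, HahnSeries.coeff_one, Matrix.vecHead, Matrix.vecTail, Function.comp]
              split_ifs <;> norm_num
            · intro f hf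
              rw [hmul]
              simp [hP, hQ, hi0, hi1, sub_mul, one_mul,
                HahnSeries.single_mul_single, HahnSeries.coeff_add,
                HahnSeries.coeff_sub, HahnSeries.coeff_single, HahnSeries.coeff_one, Matrix.vecHead, Matrix.vecTail, Function.comp]
              split_ifs <;>
                first | (exfalso; linarith [hnonneg r0 0, hnonneg r1 0]) | norm_num
          exact ⟨key.1, key.2.trans e0.symm⟩
        · have key : (P * Q) i 1 ≠ 0 ∧ ((P * Q) i 1).order = 0 := by
            apply ord_eq_of
            · rw [hmul]
              simp [hP, hQ, hi0, hi1, sub_mul, one_mul,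
                HahnSeries.single_mul_single, HahnSeries.coeff_add,
                HahnSeries.coeff_sub, HahnSeries.coeff_single, HahnSeries.coeff_one, Matrix.vecHead, Matrix.vecTail, Function.comp]
              split_ifs <;> norm_num
            · intro f hf
              rw [hmul]
              simp [hP, hQ, hi0, hi1, sub_mul, one_mul,
                HahnSeries.single_mul_single, HahnSeries.coeff_add,
                HahnSeries.coeff_sub, HahnSeries.coeff_single, HahnSeries.coeff_one, Matrix.vecHead, Matrix.vecTail, Function.comp]
              split_ifs <;>
                first | (exfalso; linarith [hnonneg r0 1, hnonneg r1 1]) | norm_num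
          exact ⟨key.1, key.2.trans e1.symm⟩
        · have key : (P * Q) i 2 ≠ 0 ∧ ((P * Q) i 2).order = 0 := by
            apply ord_eq_of
            · rw [hmul]
              simp [hP, hQ, hi0, hi1, sub_mul, one_mul,
                HahnSeries.single_mul_single, HahnSeries.coeff_add,
                HahnSeries.coeff_sub, HahnSeries.coeff_single, HahnSeries.coeff_one, Matrix.vecHead, Matrix.vecTail, Function.comp]
              split_ifs <;> norm_num
            · intro f hf
              rw [hmul]
              simp [hP, hQ, hi0, hi1, sub_mul, one_mul,
                HahnSeries.single_mul_single, HahnSeries.coeff_add,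
                HahnSeries.coeff_sub, HahnSeries.coeff_single, HahnSeries.coeff_one, Matrix.vecHead, Matrix.vecTail, Function.comp]
              split_ifs <;>
                first | (exfalso; linarith [hnonneg r0 2, hnonneg r1 2]) | norm_num
          exact ⟨key.1, key.2.trans e2.symm⟩
        · have key : (P * Q) i 3 ≠ 0 ∧ ((P * Q) i 3).order = A i 3 := by
            apply ord_eq_of
            · rw [hmul]
              simp [hP, hQ, hi0, hi1, f03, f13, (show ((3:Fin 5):ℕ) = 3 from rfl), sub_mul, one_mul,
                HahnSeries.single_mul_single, HahnSeries.coeff_add,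
                HahnSeries.coeff_sub, HahnSeries.coeff_single, HahnSeries.coeff_one, Matrix.vecHead, Matrix.vecTail, Function.comp]
              split_ifs <;> norm_num
            · intro f hf
              rw [hmul]
              simp [hP, hQ, hi0, hi1, f03, f13, (show ((3:Fin 5):ℕ) = 3 from rfl), sub_mul, one_mul,
                HahnSeries.single_mul_single, HahnSeries.coeff_add,
                HahnSeries.coeff_sub, HahnSeries.coeff_single, HahnSeries.coeff_one, Matrix.vecHead, Matrix.vecTail, Function.comp]
              split_ifs <;> first | (exfalso; linarith) | norm_num
          exact key
        · have key : (P * Q) i 4 ≠ 0 ∧ ((P * Q) i 4).order = A i 4 := by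
            apply ord_eq_of
            · rw [hmul]
              simp [hP, hQ, hi0, hi1, f04, f14, (show ((4:Fin 5):ℕ) = 4 from rfl), sub_mul, one_mul,
                HahnSeries.single_mul_single, HahnSeries.coeff_add,
                HahnSeries.coeff_sub, HahnSeries.coeff_single, HahnSeries.coeff_one, Matrix.vecHead, Matrix.vecTail, Function.comp]
              split_ifs <;> norm_num
            · intro f hf
              rw [hmul]
              simp [hP, hQ, hi0, hi1, f04, f14, (show ((4:Fin 5):ℕ) = 4 from rfl), sub_mul, one_mul,
                HahnSeries.single_mul_single, HahnSeries.coeff_add,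
                HahnSeries.coeff_sub, HahnSeries.coeff_single, HahnSeries.coeff_one, Matrix.vecHead, Matrix.vecTail, Function.comp]
              split_ifs <;> first | (exfalso; linarith) | norm_num
          exact key
  · calc (P * Q).rank ≤ Q.rank := Matrix.rank_mul_le_right P Q
    _ ≤ 3 := by simpa using Q.rank_le_card_height


lemma rank_submatrix_le'' {m n r s : ℕ} (F : Matrix (Fin m) (Fin n) Ktilde)
    (ri : Fin r → Fin m) (ci : Fin s → Fin n) :
    (F.submatrix ri ci).rank ≤ F.rank := by
  have hEq : F.submatrix ri ci =
      (Matrix.of fun (i : Fin r) (k : Fin m) => if k = ri i then (1 : Ktilde) else 0) *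
      (F * Matrix.of fun (l : Fin n) (j : Fin s) => if l = ci j then (1 : Ktilde) else 0) := by
    ext i j
    simp [Matrix.mul_apply, ite_mul, mul_ite]
  rw [hEq]
  exact le_trans (Matrix.rank_mul_le_right _ _) (Matrix.rank_mul_le_left _ _)

theorem kapRank_mirror_case {g : ℕ} (hg : 2 ≤ g)
    (A : Matrix (Fin g) (Fin 5) ℝ)
    (hnonneg : ∀ i j, 0 ≤ A i j)
    (h1 : ∀ i : Fin g, (i : ℕ) < 2 → A i 3 = 0 ∧ A i 4 = 0)
    (h2 : ∀ i : Fin g, 2 ≤ (i : ℕ) → A i 0 = 0 ∧ A i 1 = 0 ∧ A i 2 = 0)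
    (htrop : tropRank A = 3) :
    kapRank A = 3 := by
  -- the set defining the tropical rank
  have h0mem : (0 : ℕ) ∈ {r | ∃ ri : Fin r → Fin g, ∃ ci : Fin r → Fin 5,
      Function.Injective ri ∧ Function.Injective ci ∧
      ¬ TropSingular (A.submatrix ri ci)} := by
    refine ⟨Fin.elim0, Fin.elim0, fun x => x.elim0, fun x => x.elim0, ?_⟩
    rintro ⟨σ, τ, hst, -, -⟩
    exact hst (Equiv.ext fun x => x.elim0)
  have hbdd : BddAbove {r | ∃ ri : Fin r → Fin g, ∃ ci : Fin r → Fin 5,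
      Function.Injective ri ∧ Function.Injective ci ∧
      ¬ TropSingular (A.submatrix ri ci)} := by
    refine ⟨5, fun r hr => ?_⟩
    obtain ⟨ri, ci, hri, hci, -⟩ := hr
    simpa using Fintype.card_le_of_injective ci hci
  have h3mem : (3 : ℕ) ∈ {r | ∃ ri : Fin r → Fin g, ∃ ci : Fin r → Fin 5,
      Function.Injective ri ∧ Function.Injective ci ∧
      ¬ TropSingular (A.submatrix ri ci)} := by
    rw [← htrop]
    exact Nat.sSup_mem ⟨0, h0mem⟩ hbdd
  obtain ⟨ri, ci, hri, hci, hns⟩ := h3mem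
  -- every lift has rank at least 3
  have hlow : ∀ F : Matrix (Fin g) (Fin 5) Ktilde, IsLift F A → 3 ≤ F.rank := by
    intro F hF
    have hdet : (F.submatrix ri ci).det ≠ 0 := by
      apply det_ne_zero_of_lift (A.submatrix ri ci) hns
      intro i j
      exact ⟨(hF (ri i) (ci j)).1, (hF (ri i) (ci j)).2⟩
    have hrank3 : (F.submatrix ri ci).rank = 3 := by
      have := Matrix.rank_of_isUnit (F.submatrix ri ci)
        ((Matrix.isUnit_iff_isUnit_det _).mpr (isUnit_iff_ne_zero.mpr hdet))
      simpa using this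
    calc (3 : ℕ) = (F.submatrix ri ci).rank := hrank3.symm
    _ ≤ F.rank := rank_submatrix_le'' F ri ci
  obtain ⟨F0, hF0lift, hF0rank⟩ := exists_good_lift hg A hnonneg h1 h2
  have hkmem : (3 : ℕ) ∈ {r | ∃ F : Matrix (Fin g) (Fin 5) Ktilde,
      IsLift F A ∧ F.rank ≤ r} := ⟨F0, hF0lift, hF0rank⟩
  refine le_antisymm (Nat.sInf_le hkmem) ?_
  apply le_csInf ⟨3, hkmem⟩
  rintro r ⟨F, hFl, hFr⟩
  exact le_trans (hlow F hFl) hFr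
end
end

section
/- Let A be a 5×5 real matrix of tropical rank 3 with all entries ≥ 0 such that: row 1 is (r, 0, 0, 0, 0) with r > 0, rows 2 and 3 have zeroes in columns 1 and 2, rows 4 and 5 have A_{i,1} > 0 and A_{i,2} > 0 and A_{i,3} = 0, and A_{4,4} = 0 and A_{5,4} > 0, A_{5,5} = 0. Then the 4×4 submatrix of A obtained by deleting row 3 and column 5 is tropically nonsingular, contradicting tropical rank 3; hence no such matrix exists. -/
open scoped Classical

noncomputable section

theorem no_such_matrix (A : Matrix (Fin 5) (Fin 5) ℝ) (r : ℝ) (hr : 0 < r)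
    (hnonneg : ∀ i j, 0 ≤ A i j)
    (hrow1 : A 0 0 = r ∧ A 0 1 = 0 ∧ A 0 2 = 0 ∧ A 0 3 = 0 ∧ A 0 4 = 0)
    (hrow23 : ∀ i : Fin 5, i = 1 ∨ i = 2 → A i 0 = 0 ∧ A i 1 = 0)
    (hrow45 : ∀ i : Fin 5, i = 3 ∨ i = 4 →
      0 < A i 0 ∧ 0 < A i 1 ∧ A i 2 = 0)
    (h44 : A 3 3 = 0) (h54 : 0 < A 4 3) (h55 : A 4 4 = 0)
    (htrop : tropRank A = 3) :
    ¬ TropSingular (A.submatrix ![0, 1, 3, 4] ![0, 1, 2, 3]) ∧ False := by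
  obtain ⟨h00, h01, h02, h03, h04⟩ := hrow1
  obtain ⟨h10, h11⟩ := hrow23 1 (Or.inl rfl)
  obtain ⟨h30, h31, h32⟩ := hrow45 3 (Or.inl rfl)
  obtain ⟨h40, h41, h42⟩ := hrow45 4 (Or.inr rfl)
  set B := A.submatrix ![0, 1, 3, 4] ![0, 1, 2, 3] with hB
  set σ₀ : Equiv.Perm (Fin 4) := Equiv.swap 0 1 * Equiv.swap 2 3 with hσ₀
  have hσ₀0 : σ₀ 0 = 1 := by decide
  have hσ₀1 : σ₀ 1 = 0 := by decide
  have hσ₀2 : σ₀ 2 = 3 := by decide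
  have hσ₀3 : σ₀ 3 = 2 := by decide
  have hnn : ∀ (σ : Equiv.Perm (Fin 4)) (i : Fin 4), 0 ≤ B i (σ i) := by
    intro σ i
    simp only [hB, Matrix.submatrix_apply]
    exact hnonneg _ _
  have hBval : ∀ i j : Fin 4, B i j = A (![0, 1, 3, 4] i) (![0, 1, 2, 3] j) := by
    intro i j; rfl
  have hsum0 : ∑ i, B i (σ₀ i) = 0 := by
    rw [Fin.sum_univ_four, hσ₀0, hσ₀1, hσ₀2, hσ₀3, hBval, hBval, hBval, hBval]
    simp only [Matrix.cons_val_zero, Matrix.cons_val_one, Matrix.head_cons,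
      Matrix.cons_val_two, Matrix.tail_cons, Matrix.cons_val_three]
    rw [h01, h10, h44]
    simpa using h42
  have hfin4 : ∀ x : Fin 4, x = 0 ∨ x = 1 ∨ x = 2 ∨ x = 3 := by decide
  have huniq : ∀ σ : Equiv.Perm (Fin 4), ∑ i, B i (σ i) = 0 → σ = σ₀ := by
    intro σ hσ
    have hz : ∀ i, B i (σ i) = 0 := by
      intro i
      exact (Finset.sum_eq_zero_iff_of_nonneg (fun i _ => hnn σ i)).mp hσ i
        (Finset.mem_univ i)
    have e3 : σ 3 = 2 := by
      have hz3 := hz 3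
      rw [hBval] at hz3
      rcases hfin4 (σ 3) with h | h | h | h <;> rw [h] at hz3 <;>
        simp only [Matrix.cons_val_zero, Matrix.cons_val_one, Matrix.head_cons,
          Matrix.cons_val_two, Matrix.tail_cons, Matrix.cons_val_three] at hz3
      · exact absurd hz3 (ne_of_gt h40)
      · exact absurd hz3 (ne_of_gt h41)
      · exact h
      · exact absurd hz3 (ne_of_gt h54)
    have e2 : σ 2 = 3 := by
      have hz2 := hz 2
      rw [hBval] at hz2
      rcases hfin4 (σ 2) with h | h | h | h
      · rw [h] at hz2
        simp only [Matrix.cons_val_zero, Matrix.cons_val_one, Matrix.head_cons,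
          Matrix.cons_val_two, Matrix.tail_cons] at hz2
        exact absurd hz2 (ne_of_gt h30)
      · rw [h] at hz2
        simp only [Matrix.cons_val_zero, Matrix.cons_val_one, Matrix.head_cons,
          Matrix.cons_val_two, Matrix.tail_cons] at hz2
        exact absurd hz2 (ne_of_gt h31)
      · exact absurd (σ.injective (h.trans e3.symm)) (by decide)
      · exact h
    have e0 : σ 0 = 1 := by
      have hz0 := hz 0
      rw [hBval] at hz0
      rcases hfin4 (σ 0) with h | h | h | h
      · rw [h] at hz0
        simp only [Matrix.cons_val_zero] at hz0
        rw [h00] at hz0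
        exact absurd hz0 (ne_of_gt hr)
      · exact h
      · exact absurd (σ.injective (h.trans e3.symm)) (by decide)
      · exact absurd (σ.injective (h.trans e2.symm)) (by decide)
    have e1 : σ 1 = 0 := by
      rcases hfin4 (σ 1) with h | h | h | h
      · exact h
      · exact absurd (σ.injective (h.trans e0.symm)) (by decide)
      · exact absurd (σ.injective (h.trans e3.symm)) (by decide)
      · exact absurd (σ.injective (h.trans e2.symm)) (by decide)
    ext i
    rcases hfin4 i with h | h | h | h <;> subst h <;>
      simp only [e0, e1, e2, e3, hσ₀0, hσ₀1, hσ₀2, hσ₀3]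
  have hdet : tropDet B = 0 := by
    apply le_antisymm
    · apply csInf_le
      · refine ⟨0, ?_⟩
        rintro v ⟨σ, rfl⟩
        exact Finset.sum_nonneg fun i _ => hnn σ i
      · exact ⟨σ₀, hsum0.symm⟩
    · refine le_csInf ⟨∑ i, B i (σ₀ i), σ₀, rfl⟩ ?_
      rintro v ⟨σ, rfl⟩
      exact Finset.sum_nonneg fun i _ => hnn σ i
  have hns : ¬ TropSingular B := by
    rintro ⟨σ, τ, hστ, hs, ht⟩
    rw [hdet] at hs ht
    exact hστ ((huniq σ hs).trans (huniq τ ht).symm)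
  refine ⟨hns, ?_⟩
  have h4mem : 4 ∈ {s | ∃ ri : Fin s → Fin 5, ∃ ci : Fin s → Fin 5,
      Function.Injective ri ∧ Function.Injective ci ∧
      ¬ TropSingular (A.submatrix ri ci)} :=
    ⟨![0, 1, 3, 4], ![0, 1, 2, 3], by decide, by decide, hns⟩
  have hbdd : BddAbove {s | ∃ ri : Fin s → Fin 5, ∃ ci : Fin s → Fin 5,
      Function.Injective ri ∧ Function.Injective ci ∧
      ¬ TropSingular (A.submatrix ri ci)} := by
    refine ⟨5, ?_⟩
    rintro s ⟨ri, ci, hri, -, -⟩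
    simpa using Fintype.card_le_of_injective ri hri
  have h4le : (4 : ℕ) ≤ tropRank A := le_csSup hbdd h4mem
  rw [htrop] at h4le
  omega
end
end
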